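/- arXiv:1412.6133 — 7 statements merged into one kernel-verified Lean document; each statement's English description precedes it below -/
import Mathlib

section
/- Let n, k, Δ be integers with 0 < k < n and 0 ≤ Δ < n. Every partially conflict-avoiding code C ∈ PCAC_Δ(n,k) with |C| ≥ k is an (n,k;Δ)-user-irrepressible sequence set of size N = |C|. -/
/-- Cyclic cross-correlation of two sequences `X, Y : ZMod n → ℕ` at shift `τ`:
`Σ_{i=0}^{n-1} X(i) * (R^τ Y)(i)` where `(R^τ Y)(i) = Y(i - τ)`. -/
def corr (n : ℕ) (X Y : ZMod n → ℕ) (τ : ℕ) : ℕ :=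
  ∑ i ∈ Finset.range n, X (i : ZMod n) * Y ((i : ZMod n) - (τ : ZMod n))

/-- Hamming cross-correlation with respect to `Δ`:
`H_Δ(X,Y) = max_{0 ≤ τ ≤ Δ} Σ_i X(i) (R^τ Y)(i)`. -/
def Hcorr (n Δ : ℕ) (X Y : ZMod n → ℕ) : ℕ :=
  (Finset.range (Δ + 1)).sup (corr n X Y)

/-- Characteristic set `I_X = {t ∈ Z_n : X(t) = 1}` (as a finite set). -/
def Iset (n : ℕ) (X : ZMod n → ℕ) : Finset (ZMod n) :=
  ((Finset.range n).image (fun (i : ℕ) => (i : ZMod n))).filter (fun t => X t = 1)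

/-- `X` is a binary sequence of length `n` and weight `k`, i.e. `X ∈ S(n,k)`. -/
def IsSeq (n k : ℕ) (X : ZMod n → ℕ) : Prop :=
  (∀ i, X i = 0 ∨ X i = 1) ∧ (Iset n X).card = k

/-- `S` is an `(n,k;Δ)`-user-irrepressible sequence set: it has at least `k`
elements, and for every choice of `k` distinct sequences from `S` and shifts
`τ_1,…,τ_k ∈ {0,…,Δ}` there are pairwise distinct indices `t_1,…,t_k ∈ Z_n`
with `(R^{τ_i} X_i)(t_i) = 1` and `(R^{τ_j} X_j)(t_i) = 0` for `j ≠ i`. -/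
def IsUI (n k Δ : ℕ) (S : Finset (ZMod n → ℕ)) : Prop :=
  k ≤ S.card ∧
  ∀ X : Fin k → (ZMod n → ℕ), (∀ i, X i ∈ S) → Function.Injective X →
    ∀ τ : Fin k → ℕ, (∀ i, τ i ≤ Δ) →
      ∃ t : Fin k → ZMod n, Function.Injective t ∧
        (∀ i, X i (t i - (τ i : ZMod n)) = 1) ∧
        (∀ i j, j ≠ i → X j (t i - (τ j : ZMod n)) = 0)

/-- `C ∈ PCAC_Δ(n,k)` : a partially conflict-avoiding code with respect to `Δ`,
of length `n` and weight `k`. -/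
def IsPCAC (n k Δ : ℕ) (C : Finset (ZMod n → ℕ)) : Prop :=
  (∀ X ∈ C, IsSeq n k X) ∧
  ∀ X ∈ C, ∀ Y ∈ C, X ≠ Y → Hcorr n Δ X Y ≤ 1

lemma Iset_eq (n : ℕ) [NeZero n] (X : ZMod n → ℕ) :
    Iset n X = Finset.univ.filter (fun t => X t = 1) := by
  unfold Iset
  congr 1
  ext t
  simp only [Finset.mem_image, Finset.mem_range, Finset.mem_univ, iff_true]
  exact ⟨t.val, t.val_lt, by simp [ZMod.natCast_val]⟩

lemma corr_eq_card (n : ℕ) [NeZero n] (X Y : ZMod n → ℕ)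
    (hX : ∀ i, X i = 0 ∨ X i = 1) (hY : ∀ i, Y i = 0 ∨ Y i = 1) (τ : ℕ) :
    corr n X Y τ =
      (Finset.univ.filter (fun t : ZMod n => X t = 1 ∧ Y (t - (τ : ZMod n)) = 1)).card := by
  rw [Finset.card_filter]
  unfold corr
  rw [← Finset.sum_nbij' (i := fun (i : ℕ) => (i : ZMod n)) (j := fun t : ZMod n => t.val)
    (s := Finset.range n) (t := Finset.univ)
    (f := fun i : ℕ => X (i : ZMod n) * Y ((i : ZMod n) - (τ : ZMod n)))
    (g := fun t : ZMod n => if X t = 1 ∧ Y (t - (τ : ZMod n)) = 1 then 1 else 0)]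
  · intro i _; simp
  · intro t _; simp [Finset.mem_range, ZMod.val_lt]
  · intro i hi; simp [ZMod.val_cast_of_lt (Finset.mem_range.mp hi)]
  · intro t _; simp [ZMod.natCast_val]
  · intro i _
    rcases hX (i : ZMod n) with h1 | h1 <;> rcases hY ((i : ZMod n) - (τ : ZMod n)) with h2 | h2 <;>
      simp [h1, h2]

lemma corr_le_Hcorr (n Δ : ℕ) (X Y : ZMod n → ℕ) (τ : ℕ) (h : τ ≤ Δ) :
    corr n X Y τ ≤ Hcorr n Δ X Y :=
  Finset.le_sup (Finset.mem_range.mpr (Nat.lt_succ_of_le h))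

lemma inter_card_le_aux (n Δ : ℕ) [NeZero n] (X Y : ZMod n → ℕ)
    (hX : ∀ i, X i = 0 ∨ X i = 1) (hY : ∀ i, Y i = 0 ∨ Y i = 1)
    (a b : ℕ) (hba : b ≤ a) (ha : a ≤ Δ) (hH : Hcorr n Δ Y X ≤ 1) :
    (Finset.univ.filter (fun t : ZMod n =>
      X (t - (a : ZMod n)) = 1 ∧ Y (t - (b : ZMod n)) = 1)).card ≤ 1 := by
  have key : (Finset.univ.filter (fun t : ZMod n =>
      X (t - (a : ZMod n)) = 1 ∧ Y (t - (b : ZMod n)) = 1)).card ≤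
      (Finset.univ.filter (fun s : ZMod n =>
        Y s = 1 ∧ X (s - ((a - b : ℕ) : ZMod n)) = 1)).card := by
    apply Finset.card_le_card_of_injOn (fun t => t - (b : ZMod n))
    · intro t ht
      simp only [Finset.mem_coe, Finset.mem_filter, Finset.mem_univ, true_and] at ht ⊢
      have : t - (b : ZMod n) - ((a - b : ℕ) : ZMod n) = t - (a : ZMod n) := by
        rw [Nat.cast_sub hba]; ring
      rw [this]
      exact ⟨ht.2, ht.1⟩
    · intro x _ y _ h
      simpa using congrArg (· + (b : ZMod n)) h
  calc _ ≤ _ := key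
    _ = corr n Y X (a - b) := (corr_eq_card n Y X hY hX (a - b)).symm
    _ ≤ Hcorr n Δ Y X := corr_le_Hcorr n Δ Y X _ (le_trans (Nat.sub_le _ _) ha)
    _ ≤ 1 := hH

lemma inter_card_le (n Δ : ℕ) [NeZero n] (X Y : ZMod n → ℕ)
    (hX : ∀ i, X i = 0 ∨ X i = 1) (hY : ∀ i, Y i = 0 ∨ Y i = 1)
    (a b : ℕ) (ha : a ≤ Δ) (hb : b ≤ Δ)
    (hXY : Hcorr n Δ X Y ≤ 1) (hYX : Hcorr n Δ Y X ≤ 1) :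
    (Finset.univ.filter (fun t : ZMod n =>
      X (t - (a : ZMod n)) = 1 ∧ Y (t - (b : ZMod n)) = 1)).card ≤ 1 := by
  rcases le_total b a with h | h
  · exact inter_card_le_aux n Δ X Y hX hY a b h ha hYX
  · have := inter_card_le_aux n Δ Y X hY hX b a h hb hXY
    calc _ = (Finset.univ.filter (fun t : ZMod n =>
        Y (t - (b : ZMod n)) = 1 ∧ X (t - (a : ZMod n)) = 1)).card := by
          congr 1; ext t; simp [and_comm]
      _ ≤ 1 := this

/-- Every partially conflict-avoiding code `C ∈ PCAC_Δ(n,k)` with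
`|C| ≥ k` is an `(n,k;Δ)`-user-irrepressible sequence set of size `N = |C|`. -/
theorem pcac_is_ui (n k Δ : ℕ) (hk : 0 < k) (hkn : k < n) (hΔ : Δ < n)
    (C : Finset (ZMod n → ℕ)) (hC : IsPCAC n k Δ C) (hcard : k ≤ C.card) :
    IsUI n k Δ C := by
  haveI : NeZero n := ⟨by omega⟩
  refine ⟨hcard, ?_⟩
  intro X hXC hXinj τ hτ
  -- binary facts
  have hseq : ∀ i, IsSeq n k (X i) := fun i => hC.1 _ (hXC i)
  have hbin : ∀ i, ∀ t, X i t = 0 ∨ X i t = 1 := fun i => (hseq i).1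
  -- the shifted support sets
  set A : Fin k → Finset (ZMod n) :=
    fun i => Finset.univ.filter (fun t : ZMod n => X i (t - (τ i : ZMod n)) = 1) with hA
  have hAcard : ∀ i, (A i).card = k := by
    intro i
    have h1 : (Finset.univ.filter (fun t : ZMod n => X i t = 1)).card = k := by
      rw [← Iset_eq]; exact (hseq i).2
    rw [← h1]
    apply Finset.card_bij (fun t _ => t - (τ i : ZMod n))
    · intro t ht; simp [hA] at ht ⊢; exact ht
    · intro a _ b _ h; simpa using congrArg (· + (τ i : ZMod n)) h
    · intro t ht
      simp at ht
      exact ⟨t + (τ i : ZMod n), by simp [hA, ht], by ring⟩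
  have hinter : ∀ i j, i ≠ j → (A i ∩ A j).card ≤ 1 := by
    intro i j hij
    have hne : X i ≠ X j := fun h => hij (hXinj h)
    have h1 := hC.2 _ (hXC i) _ (hXC j) hne
    have h2 := hC.2 _ (hXC j) _ (hXC i) hne.symm
    have : A i ∩ A j = Finset.univ.filter (fun t : ZMod n =>
        X i (t - (τ i : ZMod n)) = 1 ∧ X j (t - (τ j : ZMod n)) = 1) := by
      ext t; simp [hA]
    rw [this]
    exact inter_card_le n Δ (X i) (X j) (hbin i) (hbin j) (τ i) (τ j) (hτ i) (hτ j) h1 h2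
  -- pick representatives
  have hBne : ∀ i, (A i \ (Finset.univ.erase i).biUnion A).Nonempty := by
    intro i
    have hsub : A i ∩ (Finset.univ.erase i).biUnion A ⊆
        ((Finset.univ.erase i)).biUnion (fun j => A i ∩ A j) := by
      intro t ht
      simp only [Finset.mem_inter, Finset.mem_biUnion] at ht
      rcases ht.2 with ⟨j, hj, hjt⟩
      exact Finset.mem_biUnion.mpr ⟨j, hj, Finset.mem_inter.mpr ⟨ht.1, hjt⟩⟩
    have hle : (A i ∩ (Finset.univ.erase i).biUnion A).card ≤ k - 1 := by
      calc (A i ∩ (Finset.univ.erase i).biUnion A).card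
          ≤ ((Finset.univ.erase i).biUnion (fun j => A i ∩ A j)).card :=
            Finset.card_le_card hsub
        _ ≤ ∑ j ∈ Finset.univ.erase i, (A i ∩ A j).card := Finset.card_biUnion_le
        _ ≤ ∑ j ∈ Finset.univ.erase i, 1 := by
            apply Finset.sum_le_sum
            intro j hj
            exact hinter i j (fun h => (Finset.mem_erase.mp hj).1 h.symm)
        _ = k - 1 := by
            rw [Finset.sum_const, smul_eq_mul, mul_one,
              Finset.card_erase_of_mem (Finset.mem_univ i), Finset.card_univ, Fintype.card_fin]
    rw [← Finset.card_pos]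
    have h3 := Finset.card_sdiff_add_card_inter (A i) ((Finset.univ.erase i).biUnion A)
    have h4 := hAcard i
    omega
  choose t ht using hBne
  have htA : ∀ i, t i ∈ A i := fun i => (Finset.mem_sdiff.mp (ht i)).1
  have htB : ∀ i j, j ≠ i → t i ∉ A j := by
    intro i j hji hmem
    exact (Finset.mem_sdiff.mp (ht i)).2
      (Finset.mem_biUnion.mpr ⟨j, Finset.mem_erase.mpr ⟨hji, Finset.mem_univ j⟩, hmem⟩)
  refine ⟨t, ?_, ?_, ?_⟩
  · intro i j hij
    by_contra hne
    exact htB i j (Ne.symm hne) (hij ▸ htA j)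
  · intro i
    have := htA i
    simpa [hA] using this
  · intro i j hji
    have h := htB i j hji
    simp only [hA, Finset.mem_filter, Finset.mem_univ, true_and] at h
    rcases hbin j (t i - (τ j : ZMod n)) with h0 | h1
    · exact h0
    · exact absurd h1 h
end

section
/- Let n, k be integers with n > k > 0 and let Δ be an integer with ⌊n/2⌋ ≤ Δ < n. If C ⊆ S(n,k) satisfies H_Δ(X,Y) ≤ 1 for all distinct X,Y ∈ C, then C is a conflict-avoiding code, i.e., H(X,Y) = 1 for all distinct X,Y ∈ C, where H denotes the Hamming cross-correlation maximized over all shifts τ with 0 ≤ τ ≤ n−1. -/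
/-- A conflict-avoiding code: `H(X,Y) = H_{n-1}(X,Y) = 1` for distinct codewords. -/
def IsCAC (n k : ℕ) (C : Finset (ZMod n → ℕ)) : Prop :=
  (∀ X ∈ C, IsSeq n k X) ∧
  ∀ X ∈ C, ∀ Y ∈ C, X ≠ Y → Hcorr n (n - 1) X Y = 1

lemma corr_eq_univ (n : ℕ) [NeZero n] (X Y : ZMod n → ℕ) (τ : ℕ) :
    corr n X Y τ = ∑ t : ZMod n, X t * Y (t - (τ : ZMod n)) := by
  unfold corr
  refine Finset.sum_nbij' (fun i => (i : ZMod n)) (fun t => t.val) ?_ ?_ ?_ ?_ ?_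
  · intro a _; exact Finset.mem_univ _
  · intro t _; exact Finset.mem_range.mpr (ZMod.val_lt t)
  · intro a ha; exact ZMod.val_cast_of_lt (Finset.mem_range.mp ha)
  · intro t _; exact ZMod.natCast_rightInverse t
  · intro a _; rfl

lemma corr_symm (n : ℕ) [NeZero n] (X Y : ZMod n → ℕ) (τ σ : ℕ)
    (h : (τ : ZMod n) + (σ : ZMod n) = 0) :
    corr n X Y τ = corr n Y X σ := by
  rw [corr_eq_univ, corr_eq_univ]
  refine Finset.sum_nbij' (fun t => t - (τ : ZMod n)) (fun s => s + (τ : ZMod n))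
    (fun _ _ => Finset.mem_univ _) (fun _ _ => Finset.mem_univ _) ?_ ?_ ?_
  · intro t _; ring
  · intro s _; ring
  · intro t _
    have hσ : (σ : ZMod n) = -(τ : ZMod n) := by linear_combination h
    rw [hσ]
    ring_nf

/-- For `n > k > 0` and `⌊n/2⌋ ≤ Δ < n`, every code
`C ∈ PCAC_Δ(n,k)` is a conflict-avoiding code: `H(X,Y) = 1` for all distinct
`X, Y ∈ C`. -/
theorem pcac_is_cac_of_large_shift (n k Δ : ℕ) (hk : 0 < k) (hkn : k < n)
    (hΔ1 : n / 2 ≤ Δ) (hΔ2 : Δ < n)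
    (C : Finset (ZMod n → ℕ)) (hC : IsPCAC n k Δ C) :
    IsCAC n k C := by
  have hn : 0 < n := hk.trans hkn
  have : NeZero n := ⟨by omega⟩
  refine ⟨hC.1, fun X hX Y hY hXY => ?_⟩
  have hupper : Hcorr n (n - 1) X Y ≤ 1 := by
    refine Finset.sup_le fun τ hτ => ?_
    have hτn : τ < n := by
      have := Finset.mem_range.mp hτ; omega
    by_cases hτΔ : τ ≤ Δ
    · exact le_trans
        (Finset.le_sup (Finset.mem_range.mpr (by omega)))
        (hC.2 X hX Y hY hXY)
    · have hσ : (τ : ZMod n) + ((n - τ : ℕ) : ZMod n) = 0 := by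
        rw [← Nat.cast_add]
        have : τ + (n - τ) = n := by omega
        rw [this, ZMod.natCast_self]
      rw [corr_symm n X Y τ (n - τ) hσ]
      refine le_trans (Finset.le_sup (Finset.mem_range.mpr (by omega)))
        (hC.2 Y hY X hX hXY.symm)
  have hlower : 1 ≤ Hcorr n (n - 1) X Y := by
    obtain ⟨ha0, haI⟩ := hC.1 X hX
    obtain ⟨hb0, hbI⟩ := hC.1 Y hY
    obtain ⟨a, ha⟩ := Finset.card_pos.mp (by rw [haI]; exact hk)
    obtain ⟨b, hb⟩ := Finset.card_pos.mp (by rw [hbI]; exact hk)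
    have hXa : X a = 1 := (Finset.mem_filter.mp ha).2
    have hYb : Y b = 1 := (Finset.mem_filter.mp hb).2
    set τ := (a - b).val with hτdef
    have h1 : 1 ≤ corr n X Y τ := by
      have hmem : a.val ∈ Finset.range n := Finset.mem_range.mpr (ZMod.val_lt a)
      calc 1 = X ((a.val : ℕ) : ZMod n) * Y (((a.val : ℕ) : ZMod n) - (τ : ZMod n)) := by
              rw [ZMod.natCast_rightInverse a, hτdef, ZMod.natCast_rightInverse (a - b)]
              simp [hXa, hYb]
        _ ≤ corr n X Y τ := by
              unfold corr
              exact Finset.single_le_sum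
                (f := fun (i : ℕ) => X (i : ZMod n) * Y ((i : ZMod n) - (τ : ZMod n)))
                (fun i _ => Nat.zero_le _) hmem
    refine le_trans h1 (Finset.le_sup (Finset.mem_range.mpr ?_))
    have := ZMod.val_lt (a - b); omega
  omega
end

section
/- Let n, k be integers with n > k > 0. If Δ is an integer with ⌊n/2⌋ ≤ Δ < n, then M_Δ(n,k) = M(n,k), i.e., the maximum size of a partially conflict-avoiding code of length n and weight k with respect to Δ equals the maximum size of a conflict-avoiding code of length n and weight k. -/
/-- `M_Δ(n,k)`: the maximum size of a code in `PCAC_Δ(n,k)`. -/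
noncomputable def Mpart (n k Δ : ℕ) : ℕ :=
  sSup {m | ∃ C : Finset (ZMod n → ℕ), IsPCAC n k Δ C ∧ C.card = m}

/-- `M(n,k)`: the maximum size of a conflict-avoiding code of length `n`, weight `k`. -/
noncomputable def Mfull (n k : ℕ) : ℕ :=
  sSup {m | ∃ C : Finset (ZMod n → ℕ), IsCAC n k C ∧ C.card = m}

lemma sum_range_zmod (n : ℕ) [NeZero n] (f : ZMod n → ℕ) :
    ∑ i ∈ Finset.range n, f (i : ZMod n) = ∑ x : ZMod n, f x := by
  exact Finset.sum_nbij' (fun i => (i : ZMod n)) (fun x => x.val)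
    (fun i _ => Finset.mem_univ _) (fun x _ => Finset.mem_range.mpr (ZMod.val_lt x))
    (fun i hi => ZMod.val_natCast_of_lt (Finset.mem_range.mp hi))
    (fun x _ => ZMod.natCast_zmod_val x)
    (fun i _ => rfl)

lemma corr_univ (n : ℕ) [NeZero n] (X Y : ZMod n → ℕ) (τ : ℕ) :
    corr n X Y τ = ∑ x : ZMod n, X x * Y (x - τ) :=
  sum_range_zmod n (fun x => X x * Y (x - (τ : ZMod n)))

lemma corr_comm (n : ℕ) [NeZero n] (X Y : ZMod n → ℕ) (τ : ℕ) (h : τ ≤ n) :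
    corr n X Y τ = corr n Y X (n - τ) := by
  rw [corr_univ, corr_univ]
  have hc : ((n - τ : ℕ) : ZMod n) = -(τ : ZMod n) := by
    rw [Nat.cast_sub h, ZMod.natCast_self, zero_sub]
  rw [hc]
  apply Fintype.sum_equiv (Equiv.subRight (τ : ZMod n))
  intro x
  simp [Equiv.subRight, mul_comm, sub_neg_eq_add, sub_add_cancel]

lemma Hcorr_le (n Δ m : ℕ) (X Y : ZMod n → ℕ) (h : ∀ τ ≤ Δ, corr n X Y τ ≤ m) :
    Hcorr n Δ X Y ≤ m :=
  Finset.sup_le fun τ hτ => h τ (Nat.lt_succ_iff.mp (Finset.mem_range.mp hτ))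

lemma one_le_Hcorr (n k : ℕ) (hn : 0 < n) (hk : 0 < k) (X Y : ZMod n → ℕ)
    (hX : IsSeq n k X) (hY : IsSeq n k Y) : 1 ≤ Hcorr n (n - 1) X Y := by
  haveI : NeZero n := ⟨hn.ne'⟩
  obtain ⟨a, ha⟩ := Finset.card_pos.mp (hX.2 ▸ hk)
  obtain ⟨b, hb⟩ := Finset.card_pos.mp (hY.2 ▸ hk)
  have hXa : X a = 1 := (Finset.mem_filter.mp ha).2
  have hYb : Y b = 1 := (Finset.mem_filter.mp hb).2
  set τ : ℕ := (a - b).val with hτdef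
  have hτc : (τ : ZMod n) = a - b := ZMod.natCast_zmod_val _
  have hτle : τ ≤ n - 1 := Nat.le_sub_one_of_lt (ZMod.val_lt _)
  refine le_trans ?_ (corr_le_Hcorr n (n-1) X Y τ hτle)
  have haval : a.val ∈ Finset.range n := Finset.mem_range.mpr (ZMod.val_lt a)
  calc 1 = X (a.val : ZMod n) * Y ((a.val : ZMod n) - (τ : ZMod n)) := by
            rw [ZMod.natCast_zmod_val, hτc]
            simp [hXa, hYb]
    _ ≤ corr n X Y τ := by
          unfold corr
          exact Finset.single_le_sum (f := fun i : ℕ => X (i : ZMod n) * Y ((i : ZMod n) - (τ : ZMod n))) (fun i _ => Nat.zero_le _) haval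


lemma pcac_iff_cac (n k Δ : ℕ) (hk : 0 < k) (hkn : k < n) (hΔ1 : n / 2 ≤ Δ) (hΔ2 : Δ < n)
    (C : Finset (ZMod n → ℕ)) : IsPCAC n k Δ C ↔ IsCAC n k C := by
  have hn : 0 < n := hk.trans hkn
  haveI : NeZero n := ⟨hn.ne'⟩
  constructor
  · rintro ⟨hseq, hcc⟩
    refine ⟨hseq, fun X hX Y hY hne => le_antisymm ?_ ?_⟩
    · apply Hcorr_le
      intro τ hτ
      by_cases h : τ ≤ Δ
      · exact le_trans (corr_le_Hcorr n Δ X Y τ h) (hcc X hX Y hY hne)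
      · push_neg at h
        rw [corr_comm n X Y τ (by omega)]
        refine le_trans (corr_le_Hcorr n Δ Y X (n - τ) (by omega)) ?_
        exact hcc Y hY X hX hne.symm
    · exact one_le_Hcorr n k hn hk X Y (hseq X hX) (hseq Y hY)
  · rintro ⟨hseq, hcc⟩
    refine ⟨hseq, fun X hX Y hY hne => ?_⟩
    refine le_trans (Finset.sup_mono ?_) (le_of_eq (hcc X hX Y hY hne))
    exact Finset.range_subset_range.mpr (by omega)


/-- For `n > k > 0` and `⌊n/2⌋ ≤ Δ < n`, `M_Δ(n,k) = M(n,k)`. -/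
theorem Mpart_eq_Mfull_of_large_shift (n k Δ : ℕ) (hk : 0 < k) (hkn : k < n)
    (hΔ1 : n / 2 ≤ Δ) (hΔ2 : Δ < n) :
    Mpart n k Δ = Mfull n k := by
  unfold Mpart Mfull
  congr 1
  ext m
  simp only [Set.mem_setOf_eq]
  exact exists_congr fun C => and_congr_left' (pcac_iff_cac n k Δ hk hkn hΔ1 hΔ2 C)
end

section
/- Let {B_1, …, B_r} be an (n,k,r)-disjoint difference set and let Δ be an integer with 0 ≤ Δ < n. Then: (i) for each block B_i and any t, t' ∈ Z_n with t ≠ t', the translated cliques C_{B_i+t} and C_{B_i+t'} have no common edge, i.e., E_0(B_i+t) ∩ E_0(B_i+t') = ∅; and (ii) for any i ≠ j and any t, t' ∈ Z_n, the supporting graphs G_Δ(B_i+t) and G_Δ(B_j+t') are edge-disjoint, i.e., E_Δ(B_i+t) ∩ E_Δ(B_j+t') = ∅. -/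
/-- Edge set `E_Δ(A)` of the supporting graph `G_Δ(A)`: all unordered pairs
`{a+τ, b+τ}` (mod `n`) with `a, b ∈ A`, `a ≠ b`, `0 ≤ τ ≤ Δ`. -/
def Eset (n Δ : ℕ) (A : Finset (ZMod n)) : Set (Sym2 (ZMod n)) :=
  {e | ∃ a ∈ A, ∃ b ∈ A, a ≠ b ∧ ∃ τ : ℕ, τ ≤ Δ ∧ e = s(a + (τ : ZMod n), b + (τ : ZMod n))}

/-- `B` is an `(n,k,r)`-disjoint difference set: a family of `r` `k`-subsets of
`Z_n` such that every nonzero element of `Z_n` occurs at most once as a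
difference `x - y` of distinct elements of a single block. -/
def IsDDS (n k r : ℕ) (B : Fin r → Finset (ZMod n)) : Prop :=
  (∀ i, (B i).card = k) ∧
  ∀ i j : Fin r, ∀ x ∈ B i, ∀ y ∈ B i, ∀ x' ∈ B j, ∀ y' ∈ B j,
    x ≠ y → x' ≠ y' → x - y = x' - y' → i = j ∧ x = x' ∧ y = y'

/-- Let `{B_1,…,B_r}` be an `(n,k,r)`-DDS and `0 ≤ Δ < n`. Then
(i) distinct translates of a single block give edge-disjoint cliques, and
(ii) translates of distinct blocks give edge-disjoint supporting graphs. -/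
theorem dds_translates_edge_disjoint (n k r Δ : ℕ) (hΔ : Δ < n)
    (B : Fin r → Finset (ZMod n)) (hB : IsDDS n k r B) :
    (∀ (i : Fin r) (t t' : ZMod n), t ≠ t' →
      Eset n 0 ((B i).image (fun x => x + t)) ∩
        Eset n 0 ((B i).image (fun x => x + t')) = ∅) ∧
    (∀ (i j : Fin r) (t t' : ZMod n), i ≠ j →
      Eset n Δ ((B i).image (fun x => x + t)) ∩
        Eset n Δ ((B j).image (fun x => x + t')) = ∅) := by
  obtain ⟨hcard, hdds⟩ := hB
  constructor
  · intro i t t' htt'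
    ext e
    simp only [Set.mem_inter_iff, Set.mem_empty_iff_false, iff_false, not_and]
    rintro ⟨a, ha, b, hb, hab, τ, hτ, rfl⟩ ⟨a', ha', b', hb', hab', τ', hτ', he⟩
    interval_cases τ
    interval_cases τ'
    simp only [Finset.mem_image] at ha hb ha' hb'
    obtain ⟨x, hx, rfl⟩ := ha
    obtain ⟨y, hy, rfl⟩ := hb
    obtain ⟨x', hx', rfl⟩ := ha'
    obtain ⟨y', hy', rfl⟩ := hb'
    simp only [Nat.cast_zero, add_zero, Sym2.eq_iff] at he
    have hxy : x ≠ y := fun h => hab (by rw [h])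
    have hxy' : x' ≠ y' := fun h => hab' (by rw [h])
    rcases he with ⟨h1, h2⟩ | ⟨h1, h2⟩
    · have hd : x - y = x' - y' := by linear_combination h1 - h2
      obtain ⟨-, hxx, -⟩ := hdds i i x hx y hy x' hx' y' hy' hxy hxy' hd
      exact htt' (by subst hxx; exact add_left_cancel h1)
    · have hd : x - y = y' - x' := by linear_combination h1 - h2
      obtain ⟨-, hxx, -⟩ := hdds i i x hx y hy y' hy' x' hx' hxy (Ne.symm hxy') hd
      exact htt' (by subst hxx; exact add_left_cancel h1)
  · intro i j t t' hij
    ext e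
    simp only [Set.mem_inter_iff, Set.mem_empty_iff_false, iff_false, not_and]
    rintro ⟨a, ha, b, hb, hab, τ, hτ, rfl⟩ ⟨a', ha', b', hb', hab', τ', hτ', he⟩
    simp only [Finset.mem_image] at ha hb ha' hb'
    obtain ⟨x, hx, rfl⟩ := ha
    obtain ⟨y, hy, rfl⟩ := hb
    obtain ⟨x', hx', rfl⟩ := ha'
    obtain ⟨y', hy', rfl⟩ := hb'
    rw [Sym2.eq_iff] at he
    have hxy : x ≠ y := fun h => hab (by rw [h])
    have hxy' : x' ≠ y' := fun h => hab' (by rw [h])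
    rcases he with ⟨h1, h2⟩ | ⟨h1, h2⟩
    · have hd : x - y = x' - y' := by linear_combination h1 - h2
      exact hij (hdds i j x hx y hy x' hx' y' hy' hxy hxy' hd).1
    · have hd : x - y = y' - x' := by linear_combination h1 - h2
      exact hij (hdds i j x hx y hy y' hy' x' hx' hxy (Ne.symm hxy') hd).1
end

section
/- Let q be a prime power and let r be either 1 or a prime with r ≥ q. Set n = r(q² − 1) and k = q. Then for every integer Δ with 0 ≤ Δ < n such that r·⌊n/(Δ+1)⌋ ≥ k, there exists an (n, k; Δ)-user-irrepressible sequence set of size N = r·⌊r(q²−1)/(Δ+1)⌋. -/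
open Polynomial

lemma sidon_of_field (F : Type) [Field F] [Fintype F] [DecidableEq F]
    (p e q : ℕ) [Fact p.Prime] [CharP F p] (hqdef : q = p ^ e) (he : 0 < e)
    (hcardF : Fintype.card F = q ^ 2) :
    ∃ D : Fin q → ZMod (q ^ 2 - 1),
      ∀ i j k l : Fin q, D i + D l = D j + D k → (i = k ∧ j = l) ∨ (i = j ∧ k = l) := by
  classical
  have hp2 : 2 ≤ p := (Fact.out : p.Prime).two_le
  have hq2 : 2 ≤ q := by
    rw [hqdef]; calc 2 ≤ p := hp2
    _ ≤ p ^ e := Nat.le_self_pow (by omega) p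
  -- the polynomial X^q - X and its root set K of cardinality q
  set P : F[X] := X ^ q - X with hP
  have hQne : (X ^ Fintype.card F - X : F[X]) ≠ 0 :=
    FiniteField.X_pow_card_sub_X_ne_zero F Fintype.one_lt_card
  have hQroots : (X ^ Fintype.card F - X : F[X]).roots = Finset.univ.val :=
    FiniteField.roots_X_pow_card_sub_X F
  have hPdvd : P ∣ (X ^ Fintype.card F - X : F[X]) := by
    have hq1 : q - 1 + 1 = q := by omega
    have h1 : P = X * ((X ^ (q - 1)) - 1) := by
      rw [hP, mul_sub, mul_one, ← pow_succ', hq1]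
    have h3 : (q - 1) * (q + 1) + 1 = q ^ 2 := by
      obtain ⟨t, rfl⟩ : ∃ t, q = t + 2 := ⟨q - 2, by omega⟩
      have h4 : t + 2 - 1 = t + 1 := rfl
      rw [h4]; ring
    have h2 : (X : F[X]) ^ Fintype.card F - X = X * ((X ^ (q - 1)) ^ (q + 1) - 1) := by
      rw [mul_sub, mul_one, ← pow_mul, ← pow_succ', h3, hcardF]
    rw [h1, h2]
    exact mul_dvd_mul_left _ (by simpa using sub_dvd_pow_sub_pow ((X : F[X]) ^ (q - 1)) 1 (q + 1))
  have hPne : P ≠ 0 := FiniteField.X_pow_card_sub_X_ne_zero F (by omega)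
  have hProots_nodup : P.roots.Nodup :=
    Multiset.nodup_of_le (Polynomial.roots.le_of_dvd hQne hPdvd)
      (by rw [hQroots]; exact Finset.univ.nodup)
  have hPdeg : P.natDegree = q := FiniteField.X_pow_card_sub_X_natDegree_eq F (by omega)
  have hQsplits : Splits (X ^ Fintype.card F - X : F[X]) := by
    apply Polynomial.splits_iff_card_roots.mpr
    rw [hQroots, FiniteField.X_pow_card_sub_X_natDegree_eq F Fintype.one_lt_card]
    simp
  have hPsplits : Splits P :=
    Polynomial.Splits.of_dvd hQsplits hQne hPdvd
  have hProotscard : Multiset.card P.roots = q := by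
    rw [Polynomial.splits_iff_card_roots.mp hPsplits, hPdeg]
  set K : Finset F := P.roots.toFinset with hK
  have hKcard : K.card = q := by
    rw [hK, Multiset.toFinset_card_of_nodup hProots_nodup, hProotscard]
  have hKfix : ∀ x ∈ K, x ^ q = x := by
    intro x hx
    rw [hK, Multiset.mem_toFinset, Polynomial.mem_roots hPne] at hx
    have := hx
    simp only [hP, IsRoot.def, eval_sub, eval_pow, eval_X, sub_eq_zero] at this
    exact this
  -- primitive element
  obtain ⟨θ, hθ⟩ := IsCyclic.exists_generator (α := Fˣ)
  have horder : orderOf θ = q ^ 2 - 1 := by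
    rw [orderOf_eq_card_of_forall_mem_zpowers hθ, Nat.card_eq_fintype_card,
      Fintype.card_units, hcardF]
  have hθF : ((θ : F)) ^ q ≠ (θ : F) := by
    intro h
    have hθ0 : (θ : F) ≠ 0 := Units.ne_zero θ
    have h1 : (θ : F) ^ (q - 1) * (θ : F) = 1 * (θ : F) := by
      rw [one_mul, ← pow_succ]
      have : q - 1 + 1 = q := by omega
      rw [this, h]
    have h2 : (θ : F) ^ (q - 1) = 1 := mul_right_cancel₀ hθ0 h1
    have h3 : θ ^ (q - 1) = 1 := Units.ext (by push_cast [h2]; simp)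
    have h4 := orderOf_dvd_of_pow_eq_one h3
    rw [horder] at h4
    have := Nat.le_of_dvd (by omega) h4
    have hqq : q ^ 2 = q * q := sq q
    have h5 : 2 * q ≤ q * q := Nat.mul_le_mul_right q hq2
    omega
  -- each element of K gives a unit θ + a
  have hne : ∀ x ∈ K, (θ : F) + x ≠ 0 := by
    intro x hx h
    have hxq := hKfix x hx
    have h5 : (θ : F) = -x := by linear_combination h
    apply hθF
    rw [h5]
    calc (-x) ^ q = (0 - x) ^ q := by ring_nf
    _ = 0 ^ q - x ^ q := by
        rw [hqdef, sub_pow_char_pow]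
    _ = -x := by rw [zero_pow (by omega), hxq, zero_sub]
  -- discrete logs
  have hlog : ∀ x ∈ K, ∃ nx : ℕ, (θ : F) ^ nx = (θ : F) + x := by
    intro x hx
    have hmem : Units.mk0 ((θ : F) + x) (hne x hx) ∈ Submonoid.powers θ :=
      mem_powers_iff_mem_zpowers.mpr (hθ _)
    obtain ⟨nx, hnx⟩ := hmem
    exact ⟨nx, by
      have := congrArg (Units.val) hnx
      push_cast at this
      simpa using this⟩
  choose dl hdl using hlog
  -- enumerate K
  have eK : Fin q ≃ {x // x ∈ K} := (Finset.equivFinOfCardEq hKcard).symm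
  set A : Fin q → F := fun i => ((eK i : {x // x ∈ K}) : F) with hA
  have hAmem : ∀ i, A i ∈ K := fun i => (eK i).2
  have hAinj : Function.Injective A := by
    intro i j h
    apply eK.injective
    exact Subtype.ext h
  refine ⟨fun i => ((dl (A i) (hAmem i) : ℕ) : ZMod (q ^ 2 - 1)), ?_⟩
  intro i j k l hsum
  -- translate the ZMod equation into an equation between units
  have hmod : dl (A i) (hAmem i) + dl (A l) (hAmem l) ≡
      dl (A j) (hAmem j) + dl (A k) (hAmem k) [MOD q ^ 2 - 1] := by
    rw [← ZMod.natCast_eq_natCast_iff]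
    push_cast
    exact hsum
  have hpow : (θ : F) ^ (dl (A i) (hAmem i) + dl (A l) (hAmem l)) =
      (θ : F) ^ (dl (A j) (hAmem j) + dl (A k) (hAmem k)) := by
    have : θ ^ (dl (A i) (hAmem i) + dl (A l) (hAmem l)) =
        θ ^ (dl (A j) (hAmem j) + dl (A k) (hAmem k)) := by
      rw [pow_eq_pow_iff_modEq, horder]
      exact hmod
    have := congrArg (Units.val) this
    push_cast at this
    simpa using this
  rw [pow_add, pow_add, hdl (A i) (hAmem i), hdl (A l) (hAmem l),
    hdl (A j) (hAmem j), hdl (A k) (hAmem k)] at hpow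
  -- now a field computation
  set a : F := A i
  set b : F := A j
  set c : F := A k
  set d : F := A l
  have hfix : ∀ x ∈ K, x ^ q = x := hKfix
  by_cases hs : a + d = b + c
  · have hprod : a * d = b * c := by linear_combination hpow - (θ:F) * hs
    have hfactor : (a - b) * (a - c) = 0 := by linear_combination a * hs - hprod
    rcases mul_eq_zero.mp hfactor with h1 | h1
    · have hab : a = b := by linear_combination h1
      have hdc : d = c := by linear_combination hs - hab
      exact Or.inr ⟨hAinj hab, hAinj hdc.symm⟩
    · have hac : a = c := by linear_combination h1
      have hdb : d = b := by linear_combination hs - hac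
      exact Or.inl ⟨hAinj hac, hAinj hdb.symm⟩
  · exfalso
    have hden : a + d - (b + c) ≠ 0 := sub_ne_zero.mpr hs
    have hθeq : (θ : F) = (b * c - a * d) / (a + d - (b + c)) := by
      field_simp
      linear_combination hpow
    apply hθF
    have hX : ∀ x ∈ K, ∀ y ∈ K, ∀ z ∈ K, ∀ w ∈ K,
        (x * y - z * w) ^ q = x * y - z * w := by
      intro x hx y hy z hz w hw
      rw [hqdef, sub_pow_char_pow, mul_pow, mul_pow, ← hqdef,
        hfix x hx, hfix y hy, hfix z hz, hfix w hw]
    have hnum : (b * c - a * d) ^ q = b * c - a * d :=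
      hX b (hAmem j) c (hAmem k) a (hAmem i) d (hAmem l)
    have hden2 : (a + d - (b + c)) ^ q = a + d - (b + c) := by
      rw [hqdef, sub_pow_char_pow, add_pow_char_pow, add_pow_char_pow, ← hqdef,
        hfix a (hAmem i), hfix d (hAmem l), hfix b (hAmem j), hfix c (hAmem k)]
    rw [hθeq, div_pow, hnum, hden2]

lemma exists_sidon (q : ℕ) (hq : IsPrimePow q) :
    ∃ D : Fin q → ZMod (q ^ 2 - 1),
      ∀ i j k l : Fin q, D i + D l = D j + D k → (i = k ∧ j = l) ∨ (i = j ∧ k = l) := by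
  obtain ⟨p, e, hp, he, rfl⟩ := hq
  haveI : Fact p.Prime := ⟨hp.nat_prime⟩
  haveI : Fintype (GaloisField p (2 * e)) := Fintype.ofFinite _
  haveI : DecidableEq (GaloisField p (2 * e)) := Classical.decEq _
  refine sidon_of_field (GaloisField p (2 * e)) p e _ rfl he ?_
  rw [← Nat.card_eq_fintype_card, GaloisField.card p (2 * e) (by omega), ← pow_mul, mul_comm]

lemma ui_construction (q r Δ m : ℕ) (hq2 : 2 ≤ q) (hm0 : 0 < m)
    (hr : r = 1 ∨ (Nat.Prime r ∧ q ≤ r))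
    (hk : q ≤ r * (r * m / (Δ + 1)))
    (D : Fin q → ZMod m)
    (hD : ∀ i j k l : Fin q, D i + D l = D j + D k → (i = k ∧ j = l) ∨ (i = j ∧ k = l)) :
    ∃ S : Finset (ZMod (r * m) → ℕ),
      IsUI (r * m) q Δ S ∧ S.card = r * (r * m / (Δ + 1)) := by
  classical
  set n : ℕ := r * m with hn
  set M : ℕ := n / (Δ + 1) with hMdef
  have hM1 : 1 ≤ M := by
    rcases Nat.eq_zero_or_pos M with h | h
    · rw [h, mul_zero] at hk; omega
    · exact h
  haveI : NeZero n := ⟨by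
    have : 1 * (Δ + 1) ≤ M * (Δ + 1) := Nat.mul_le_mul_right _ hM1
    have h2 : M * (Δ + 1) ≤ n := Nat.div_mul_le_self n (Δ + 1)
    omega⟩
  have hMn : M * (Δ + 1) ≤ n := Nat.div_mul_le_self n (Δ + 1)
  haveI : NeZero m := ⟨by omega⟩
  -- the base points
  set d : Fin q → ℕ := fun i => (D i).val with hd
  set x : ℕ → Fin q → ZMod n := fun a i => ((d i + m * (a * i.val) : ℕ) : ZMod n) with hx
  set ψ : ZMod n →+* ZMod m := ZMod.castHom (dvd_mul_left m r) (ZMod m) with hψ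
  have hψx : ∀ a i, ψ (x a i) = D i := by
    intro a i
    rw [hx]
    simp only [map_natCast]
    push_cast
    rw [ZMod.natCast_self]
    simp [hd, ZMod.natCast_val, ZMod.cast_id]
  -- key Sidon-type lemma for the points `x a i`
  have key : ∀ a a' : ℕ, a < r → a' < r → ∀ i j k l : Fin q,
      x a i + x a' l = x a' j + x a k →
      (i = k ∧ j = l) ∨ (a = a' ∧ i = j ∧ k = l) := by
    intro a a' ha ha' i j k l heq
    have hψeq := congrArg ψ heq
    rw [map_add, map_add, hψx, hψx, hψx, hψx] at hψeq
    rcases hD i j k l hψeq with ⟨hik, hjl⟩ | ⟨hij, hkl⟩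
    · exact Or.inl ⟨hik, hjl⟩
    · by_cases haa : a = a'
      · exact Or.inr ⟨haa, hij, hkl⟩
      · -- a ≠ a' : derive i = k using r prime
        subst hij hkl
        rcases hr with h1 | ⟨hrp, hqr⟩
        · omega
        haveI : Fact r.Prime := ⟨hrp⟩
        have hnat : ((m * (a * i.val) + (m * (a' * k.val)) + (d i + d k) : ℕ) : ZMod n)
            = ((m * (a' * i.val) + (m * (a * k.val)) + (d i + d k) : ℕ) : ZMod n) := by
          push_cast
          rw [hx] at heq
          push_cast at heq
          linear_combination heq
        have hmod := (ZMod.natCast_eq_natCast_iff _ _ _).mp hnat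
        have hmod2 := Nat.ModEq.add_right_cancel' _ hmod
        have hmod3 : m * (a * i.val + a' * k.val) ≡ m * (a' * i.val + a * k.val) [MOD m * r] := by
          rw [mul_add, mul_add]
          rw [hn, mul_comm r m] at hmod2
          exact hmod2
        have hmod4 := Nat.ModEq.mul_left_cancel' (by omega) hmod3
        have hcast := (ZMod.natCast_eq_natCast_iff _ _ _).mpr hmod4
        push_cast at hcast
        have hfac : ((a : ZMod r) - (a' : ZMod r)) * ((i.val : ZMod r) - (k.val : ZMod r)) = 0 := by
          linear_combination hcast
        rcases mul_eq_zero.mp hfac with h0 | h0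
        · exfalso
          apply haa
          have h1 : (a : ZMod r) = (a' : ZMod r) := by linear_combination h0
          have := congrArg ZMod.val h1
          rwa [ZMod.val_cast_of_lt ha, ZMod.val_cast_of_lt ha'] at this
        · have h1 : (i.val : ZMod r) = (k.val : ZMod r) := by linear_combination h0
          have h2 := congrArg ZMod.val h1
          rw [ZMod.val_cast_of_lt (by omega : i.val < r),
            ZMod.val_cast_of_lt (by omega : k.val < r)] at h2
          have hik : i = k := Fin.ext h2
          exact Or.inl ⟨hik, hik⟩
  -- injectivity of the base points
  have hxinj : ∀ a : ℕ, Function.Injective (x a) := by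
    intro a i k h
    have h1 : D i = D k := by rw [← hψx a i, ← hψx a k, h]
    have h2 : D i + D k = D k + D k := by rw [h1]
    rcases hD i k k k h2 with ⟨h3, _⟩ | ⟨h3, _⟩ <;> exact h3
  -- supports
  set B : ℕ → ZMod n := fun b => ((b * (Δ + 1) : ℕ) : ZMod n) with hB
  set supp : ℕ → ℕ → Finset (ZMod n) :=
    fun a b => Finset.image (fun i : Fin q => x a i + B b) Finset.univ with hsupp
  have hsuppcard : ∀ a b, (supp a b).card = q := by
    intro a b
    rw [hsupp]
    rw [Finset.card_image_of_injective _ (fun i k h => hxinj a (add_right_cancel h))]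
    simp
  set seq : ℕ → ℕ → (ZMod n → ℕ) :=
    fun a b t => if t ∈ supp a b then 1 else 0 with hseq
  -- the intersection bound
  have inter : ∀ a b a' b' : ℕ, a < r → b < M → a' < r → b' < M →
      ((a, b) : ℕ × ℕ) ≠ (a', b') → ∀ τ τ' : ℕ, τ ≤ Δ → τ' ≤ Δ →
      (((supp a b).image (· + ((τ : ℕ) : ZMod n))) ∩
        ((supp a' b').image (· + ((τ' : ℕ) : ZMod n)))).card ≤ 1 := by
    intro a b a' b' ha hb ha' hb' hab τ τ' hτ hτ'
    rw [Finset.card_le_one]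
    intro w hw w' hw'
    rw [Finset.mem_inter, Finset.mem_image, Finset.mem_image] at hw hw'
    obtain ⟨⟨w1, hw1, hw1e⟩, ⟨w2, hw2, hw2e⟩⟩ := hw
    obtain ⟨⟨w3, hw3, hw3e⟩, ⟨w4, hw4, hw4e⟩⟩ := hw'
    rw [hsupp, Finset.mem_image] at hw1 hw2 hw3 hw4
    obtain ⟨i, _, hi⟩ := hw1
    obtain ⟨j, _, hj⟩ := hw2
    obtain ⟨k, _, hk2⟩ := hw3
    obtain ⟨l, _, hl⟩ := hw4
    subst hi hj hk2 hl
    -- equations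
    have e1 : x a i + B b + ((τ : ℕ) : ZMod n) = w := hw1e
    have e2 : x a' j + B b' + ((τ' : ℕ) : ZMod n) = w := hw2e
    have e3 : x a k + B b + ((τ : ℕ) : ZMod n) = w' := hw3e
    have e4 : x a' l + B b' + ((τ' : ℕ) : ZMod n) = w' := hw4e
    have hcomb : x a i + x a' l = x a' j + x a k := by
      linear_combination e1 - e2 + e4 - e3
    rcases key a a' ha ha' i j k l hcomb with ⟨hik, hjl⟩ | ⟨haa, hij, hkl⟩
    · rw [← e1, ← e3, hik]
    · -- same a, so b = b' forced, contradiction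
      exfalso
      subst haa hij hkl
      have e5 : B b + ((τ : ℕ) : ZMod n) = B b' + ((τ' : ℕ) : ZMod n) := by
        linear_combination e1 - e2
      have e6 : ((b * (Δ + 1) + τ : ℕ) : ZMod n) = ((b' * (Δ + 1) + τ' : ℕ) : ZMod n) := by
        push_cast
        rw [hB] at e5
        push_cast at e5
        linear_combination e5
      have hblt : ∀ c tt : ℕ, c < M → tt ≤ Δ → c * (Δ + 1) + tt < n := by
        intro c tt hc htt
        have h1 : c * (Δ + 1) + (Δ + 1) ≤ M * (Δ + 1) := by
          have : (c + 1) * (Δ + 1) ≤ M * (Δ + 1) := Nat.mul_le_mul_right _ (by omega)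
          calc c * (Δ + 1) + (Δ + 1) = (c + 1) * (Δ + 1) := by ring
          _ ≤ M * (Δ + 1) := this
        omega
      have e7 := congrArg ZMod.val e6
      rw [ZMod.val_cast_of_lt (hblt b τ hb hτ), ZMod.val_cast_of_lt (hblt b' τ' hb' hτ')] at e7
      have hbb : b = b' := by
        have h1 : b = (b * (Δ + 1) + τ) / (Δ + 1) := by
          rw [mul_comm, Nat.mul_add_div (by omega), Nat.div_eq_of_lt (by omega)]
          omega
        have h2 : b' = (b' * (Δ + 1) + τ') / (Δ + 1) := by
          rw [mul_comm, Nat.mul_add_div (by omega), Nat.div_eq_of_lt (by omega)]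
          omega
        rw [h1, h2, e7]
      apply hab
      rw [hbb]
  -- distinctness of the sequences
  have hne_seq : ∀ a b a' b' : ℕ, a < r → b < M → a' < r → b' < M →
      ((a, b) : ℕ × ℕ) ≠ (a', b') → seq a b ≠ seq a' b' := by
    intro a b a' b' ha hb ha' hb' hab heq
    have hsupp_eq : supp a b = supp a' b' := by
      ext t
      have h1 := congrFun heq t
      rw [hseq] at h1
      simp only at h1
      constructor
      · intro h
        by_contra h2
        rw [if_pos h, if_neg h2] at h1
        omega
      · intro h
        by_contra h2
        rw [if_neg h2, if_pos h] at h1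
        omega
    have h3 := inter a b a' b' ha hb ha' hb' hab 0 0 (by omega) (by omega)
    have himg : ∀ s : Finset (ZMod n), s.image (· + ((0 : ℕ) : ZMod n)) = s := by
      intro s
      simp
    rw [hsupp_eq, himg, Finset.inter_self, hsuppcard a' b'] at h3
    omega
  -- the sequence set
  set S : Finset (ZMod n → ℕ) :=
    (Finset.range r ×ˢ Finset.range M).image (fun ab => seq ab.1 ab.2) with hS
  have hScard : S.card = r * M := by
    rw [hS, Finset.card_image_of_injOn, Finset.card_product, Finset.card_range,
      Finset.card_range]
    intro ab hab ab' hab' heq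
    simp only [Finset.mem_coe, Finset.mem_product, Finset.mem_range] at hab hab'
    by_contra hne
    exact hne_seq ab.1 ab.2 ab'.1 ab'.2 hab.1 hab.2 hab'.1 hab'.2
      (by simpa [Prod.ext_iff] using hne) heq
  refine ⟨S, ⟨by rw [hScard]; exact hk, ?_⟩, hScard⟩
  intro X hX hXinj τ hτ
  -- recover the parameters of each chosen sequence
  have hXg : ∀ i : Fin q, ∃ ab : ℕ × ℕ, ab.1 < r ∧ ab.2 < M ∧ seq ab.1 ab.2 = X i := by
    intro i
    have := hX i
    rw [hS, Finset.mem_image] at this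
    obtain ⟨ab, habmem, habeq⟩ := this
    rw [Finset.mem_product, Finset.mem_range, Finset.mem_range] at habmem
    exact ⟨ab, habmem.1, habmem.2, habeq⟩
  choose g hg1 hg2 hg3 using hXg
  set U : Fin q → Finset (ZMod n) :=
    fun i => (supp (g i).1 (g i).2).image (· + ((τ i : ℕ) : ZMod n)) with hU
  have hUcard : ∀ i, (U i).card = q := by
    intro i
    rw [hU]
    rw [Finset.card_image_of_injective _ (fun u v h => add_right_cancel h)]
    exact hsuppcard _ _
  have hgne : ∀ i j : Fin q, i ≠ j → g i ≠ g j := by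
    intro i j hij h
    exact hij (hXinj (by rw [← hg3 i, ← hg3 j, h]))
  have hUinter : ∀ i j : Fin q, i ≠ j → (U i ∩ U j).card ≤ 1 := by
    intro i j hij
    exact inter _ _ _ _ (hg1 i) (hg2 i) (hg1 j) (hg2 j)
      (by simpa [Prod.ext_iff, ← Prod.ext_iff] using hgne i j hij) _ _ (hτ i) (hτ j)
  have hpick : ∀ i : Fin q, (U i \ (Finset.univ.erase i).biUnion U).Nonempty := by
    intro i
    rw [← Finset.card_pos]
    have h1 : (U i ∩ (Finset.univ.erase i).biUnion U).card ≤ q - 1 := by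
      calc (U i ∩ (Finset.univ.erase i).biUnion U).card
          = ((Finset.univ.erase i).biUnion (fun j => U i ∩ U j)).card := by
            rw [Finset.inter_biUnion]
        _ ≤ ∑ j ∈ Finset.univ.erase i, (U i ∩ U j).card := Finset.card_biUnion_le
        _ ≤ ∑ _j ∈ Finset.univ.erase i, 1 := by
            apply Finset.sum_le_sum
            intro j hj
            exact hUinter i j (fun h => (Finset.mem_erase.mp hj).1 h.symm)
        _ = (Finset.univ.erase i).card := by rw [Finset.sum_const, smul_eq_mul, mul_one]
        _ = q - 1 := by rw [Finset.card_erase_of_mem (Finset.mem_univ i), Finset.card_univ,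
            Fintype.card_fin]
    have h2 := Finset.card_inter_add_card_sdiff (U i) ((Finset.univ.erase i).biUnion U)
    have h3 := hUcard i
    omega
  set t : Fin q → ZMod n := fun i => (hpick i).choose with ht
  have htmem : ∀ i, t i ∈ U i \ (Finset.univ.erase i).biUnion U := fun i => (hpick i).choose_spec
  have htU : ∀ i, t i ∈ U i := fun i => (Finset.mem_sdiff.mp (htmem i)).1
  have htnot : ∀ i j, j ≠ i → t i ∉ U j := by
    intro i j hji hmem
    exact (Finset.mem_sdiff.mp (htmem i)).2
      (Finset.mem_biUnion.mpr ⟨j, Finset.mem_erase.mpr ⟨hji, Finset.mem_univ j⟩, hmem⟩)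
  refine ⟨t, ?_, ?_, ?_⟩
  · intro i j hij
    by_contra hne
    exact htnot i j (fun h => hne h.symm) (by rw [hij]; exact htU j)
  · intro i
    obtain ⟨s0, hs0, hs0e⟩ := Finset.mem_image.mp (htU i)
    rw [← hg3 i, hseq]
    simp only
    rw [if_pos]
    have : t i - ((τ i : ℕ) : ZMod n) = s0 := by rw [← hs0e]; ring
    rwa [this]
  · intro i j hji
    rw [← hg3 j, hseq]
    simp only
    rw [if_neg]
    intro hmem
    apply htnot i j hji
    rw [hU]
    refine Finset.mem_image.mpr ⟨t i - ((τ j : ℕ) : ZMod n), hmem, by ring⟩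

/-- Let `q` be a prime power and `r = 1` or a prime `r ≥ q`.
With `n = r(q²-1)` and `k = q`, for every `0 ≤ Δ < n` with `r·⌊n/(Δ+1)⌋ ≥ k`
there is an `(n,k;Δ)`-UI sequence set of size `N = r·⌊r(q²-1)/(Δ+1)⌋`. -/
theorem ui_from_bose (q r Δ : ℕ) (hq : IsPrimePow q)
    (hr : r = 1 ∨ (Nat.Prime r ∧ q ≤ r))
    (hΔ : Δ < r * (q ^ 2 - 1))
    (hk : q ≤ r * (r * (q ^ 2 - 1) / (Δ + 1))) :
    ∃ S : Finset (ZMod (r * (q ^ 2 - 1)) → ℕ),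
      IsUI (r * (q ^ 2 - 1)) q Δ S ∧
      S.card = r * (r * (q ^ 2 - 1) / (Δ + 1)) := by
  obtain ⟨D, hD⟩ := exists_sidon q hq
  have hq2 : 2 ≤ q := hq.two_le
  have hm0 : 0 < q ^ 2 - 1 := by
    have : 2 * 2 ≤ q * q := Nat.mul_le_mul hq2 hq2
    have hqq : q ^ 2 = q * q := sq q
    omega
  exact ui_construction q r Δ (q ^ 2 - 1) hq2 hm0 hr hk D hD
end

section
/- Let n ≥ 3 and let Δ be an integer with 0 ≤ Δ < ⌊n/2⌋. The maximum size of a (2,Δ)-packing of K_n equals ((n−1)/2)·⌊n/(Δ+1)⌋ if n is odd, and equals (n/2 − 1)·⌊n/(Δ+1)⌋ + ⌊n/(2Δ+2)⌋ if n is even. That is, a (2,Δ)-packing of that size exists, and every (2,Δ)-packing of K_n has size at most that value. -/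
/-- `P` is a `(k,Δ)`-packing of `K_n`: a family of `k`-subsets of `Z_n` whose
supporting graphs are pairwise edge-disjoint. -/
def IsPacking (n k Δ : ℕ) (P : Finset (Finset (ZMod n))) : Prop :=
  (∀ A ∈ P, A.card = k) ∧
  ∀ A ∈ P, ∀ B ∈ P, A ≠ B → Eset n Δ A ∩ Eset n Δ B = ∅

namespace TwoPack

variable {n : ℕ} [NeZero n]

omit [NeZero n] in
lemma cast_inj_lt {a b : ℕ} (ha : a < n) (hb : b < n) : (a : ZMod n) = b ↔ a = b := by
  rw [ZMod.natCast_eq_natCast_iff', Nat.mod_eq_of_lt ha, Nat.mod_eq_of_lt hb]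

/-- difference class of an edge -/
def dcl : Sym2 (ZMod n) → ℕ :=
  Sym2.lift ⟨fun a b => min (a - b).val (b - a).val, fun _ _ => min_comm _ _⟩

omit [NeZero n] in
@[simp] lemma dcl_mk (a b : ZMod n) : dcl s(a, b) = min (a - b).val (b - a).val := rfl

omit [NeZero n] in
lemma dcl_shift (a b τ : ZMod n) : dcl s(a + τ, b + τ) = dcl s(a, b) := by
  simp [dcl_mk, add_sub_add_right_eq_sub]

lemma dcl_base (x : ZMod n) {d : ℕ} (hd1 : 0 < d) (hd2 : 2 * d ≤ n) :
    dcl s(x, x + (d : ZMod n)) = d := by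
  have hdn : d < n := by omega
  have h1 : x + (d : ZMod n) - x = (d : ZMod n) := by ring
  have h2 : x - (x + (d : ZMod n)) = -(d : ZMod n) := by ring
  have hv : ((d : ZMod n)).val = d := ZMod.val_cast_of_lt hdn
  have hne : (d : ZMod n) ≠ 0 := by
    rw [Ne, ZMod.natCast_eq_zero_iff]
    intro h
    exact absurd (Nat.le_of_dvd hd1 h) (by omega)
  rw [dcl_mk, h1, h2, hv, ZMod.neg_val, if_neg hne, hv]
  omega

/-- the two cases for equality of canonical edges -/
lemma base_eq_cases {x y : ZMod n} {d : ℕ} (hd2 : 2 * d ≤ n)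
    (h : s(x, x + (d : ZMod n)) = s(y, y + (d : ZMod n))) :
    x = y ∨ (2 * d = n ∧ x = y + (d : ZMod n)) := by
  rw [Sym2.eq_iff] at h
  rcases h with ⟨h1, _⟩ | ⟨h1, h2⟩
  · exact Or.inl h1
  · rcases Nat.eq_zero_or_pos d with rfl | hd1
    · exact Or.inl (by simpa using h1)
    right
    have h3 : ((2 * d : ℕ) : ZMod n) = 0 := by
      have hx : x + ((d : ZMod n) + (d : ZMod n)) = x := by
        rw [← add_assoc, h2, ← h1]
      have h4 := add_eq_left.mp hx
      push_cast
      rw [two_mul]; exact h4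
    rw [ZMod.natCast_eq_zero_iff] at h3
    exact ⟨le_antisymm hd2 (Nat.le_of_dvd (by omega) h3), h1⟩

/-- every edge of class d is canonical -/
lemma dcl_eq_imp (e : Sym2 (ZMod n)) {d : ℕ} (hd2 : 2 * d ≤ n)
    (h : dcl e = d) : ∃ x : ZMod n, e = s(x, x + (d : ZMod n)) := by
  induction e with
  | h a b =>
    rw [dcl_mk] at h
    rcases (show (b - a).val = d ∨ (a - b).val = d by omega) with hc | hc
    · refine ⟨a, ?_⟩
      have : b = a + (d : ZMod n) := by
        rw [← hc]; simp [ZMod.natCast_val, ZMod.cast_id]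
      rw [this]
    · refine ⟨b, ?_⟩
      have : a = b + (d : ZMod n) := by
        rw [← hc]; simp [ZMod.natCast_val, ZMod.cast_id]
      rw [this, Sym2.eq_swap]

/-- difference class of a 2-set -/
def Dcl (A : Finset (ZMod n)) : ℕ :=
  A.sup fun a => A.sup fun b => if a = b then 0 else min (a - b).val (b - a).val

omit [NeZero n] in
lemma Dcl_pair {a b : ZMod n} (h : a ≠ b) :
    Dcl {a, b} = dcl s(a, b) := by
  rw [Dcl, dcl_mk]
  simp only [Finset.sup_insert, Finset.sup_singleton, if_pos rfl, if_neg h, if_neg h.symm]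
  simp [min_comm (b - a).val (a - b).val]

lemma Dcl_bounds {a b : ZMod n} (h : a ≠ b) :
    0 < Dcl {a, b} ∧ 2 * Dcl {a, b} ≤ n := by
  rw [Dcl_pair h, dcl_mk]
  have h1 : a - b ≠ 0 := sub_ne_zero.mpr h
  have h2 : 0 < (a - b).val := ZMod.val_pos.mpr h1
  have h3 : (b - a).val = n - (a - b).val := by
    rw [show b - a = -(a - b) by ring, ZMod.neg_val, if_neg h1]
  have h4 : (a - b).val < n := (a - b).val_lt
  omega

omit [NeZero n] in
lemma Eset_pair {Δ : ℕ} {a b : ZMod n} (h : a ≠ b) {e : Sym2 (ZMod n)} :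
    e ∈ Eset n Δ {a, b} ↔ ∃ τ : ℕ, τ ≤ Δ ∧ e = s(a + (τ : ZMod n), b + (τ : ZMod n)) := by
  constructor
  · rintro ⟨u, hu, v, hv, huv, τ, hτ, rfl⟩
    simp only [Finset.mem_insert, Finset.mem_singleton] at hu hv
    rcases hu with rfl | rfl <;> rcases hv with rfl | rfl
    · exact absurd rfl huv
    · exact ⟨τ, hτ, rfl⟩
    · exact ⟨τ, hτ, Sym2.eq_swap⟩
    · exact absurd rfl huv
  · rintro ⟨τ, hτ, rfl⟩
    exact ⟨a, by simp, b, by simp, h, τ, hτ, rfl⟩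

lemma dcl_of_mem_Eset {Δ : ℕ} {a b : ZMod n} (h : a ≠ b) {e : Sym2 (ZMod n)}
    (he : e ∈ Eset n Δ {a, b}) : dcl e = Dcl {a, b} := by
  rw [Dcl_pair h]
  obtain ⟨τ, _, rfl⟩ := (Eset_pair h).mp he
  exact dcl_shift a b τ

noncomputable def EsetF (n Δ : ℕ) [NeZero n] (A : Finset (ZMod n)) : Finset (Sym2 (ZMod n)) :=
  @Finset.filter _ (· ∈ Eset n Δ A) (Classical.decPred _) Finset.univ

lemma mem_EsetF {Δ : ℕ} {A : Finset (ZMod n)} {e : Sym2 (ZMod n)} :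
    e ∈ EsetF n Δ A ↔ e ∈ Eset n Δ A := by
  classical
  constructor
  · intro h
    exact ((@Finset.mem_filter _ (· ∈ Eset n Δ A) (Classical.decPred _) _ _).mp h).2
  · intro h
    have := (@Finset.mem_filter _ (· ∈ Eset n Δ A) (Classical.decPred _) _ _).mpr ⟨Finset.mem_univ e, h⟩
    exact this

lemma shift_injOn {Δ : ℕ} (hΔ : 2 * Δ < n) {a b : ZMod n} (hab : a ≠ b) :
    Set.InjOn (fun τ : ℕ => s(a + (τ : ZMod n), b + (τ : ZMod n))) (Finset.range (Δ + 1)) := by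
  intro τ hτ σ hσ h
  simp only [Finset.coe_range, Set.mem_Iio] at hτ hσ
  simp only [Sym2.eq_iff] at h
  rcases h with ⟨h1, _⟩ | ⟨h1, h2⟩
  · exact (cast_inj_lt (by omega) (by omega)).mp (add_left_cancel h1)
  · exfalso
    have hsum : a + (τ : ZMod n) + (b + (τ : ZMod n)) = b + (σ : ZMod n) + (a + (σ : ZMod n)) := by
      rw [h1, h2]
    have h2τ : ((2 * τ : ℕ) : ZMod n) = ((2 * σ : ℕ) : ZMod n) := by
      push_cast
      ring_nf; ring_nf at hsum; linear_combination hsum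
    have hτσ : τ = σ := by
      have h2' := (cast_inj_lt (show 2 * τ < n by omega) (show 2 * σ < n by omega)).mp h2τ
      omega
    subst hτσ
    exact hab (add_right_cancel h1)

lemma card_EsetF {Δ : ℕ} (hΔ : 2 * Δ < n) {a b : ZMod n} (hab : a ≠ b) :
    (EsetF n Δ {a, b}).card = Δ + 1 := by
  have himg : EsetF n Δ {a, b} =
      (Finset.range (Δ + 1)).image (fun τ : ℕ => s(a + (τ : ZMod n), b + (τ : ZMod n))) := by
    ext e
    rw [mem_EsetF, Eset_pair hab, Finset.mem_image]
    constructor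
    · rintro ⟨τ, hτ, rfl⟩
      exact ⟨τ, Finset.mem_range.mpr (by omega), rfl⟩
    · rintro ⟨τ, hτ, rfl⟩
      exact ⟨τ, by have := Finset.mem_range.mp hτ; omega, rfl⟩
  rw [himg, Finset.card_image_of_injOn (shift_injOn hΔ hab), Finset.card_range]

lemma edges_card_le {d : ℕ} (hd2 : 2 * d ≤ n) (S : Finset (Sym2 (ZMod n)))
    (hS : ∀ e ∈ S, dcl e = d) : S.card ≤ if 2 * d = n then n / 2 else n := by
  by_cases h : 2 * d = n
  · rw [if_pos h]
    have hsub : S ⊆ (Finset.range d).image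
        (fun j : ℕ => s((j : ZMod n), (j : ZMod n) + (d : ZMod n))) := by
      intro e he
      obtain ⟨x, rfl⟩ := dcl_eq_imp e hd2 (hS e he)
      have hxv : x.val < n := x.val_lt
      have hdd : (d : ZMod n) + (d : ZMod n) = 0 := by
        have h0 : ((2 * d : ℕ) : ZMod n) = 0 := by rw [h]; exact ZMod.natCast_self n
        push_cast at h0
        linear_combination h0
      rcases lt_or_ge x.val d with hx | hx
      · refine Finset.mem_image.mpr ⟨x.val, Finset.mem_range.mpr hx, ?_⟩
        simp [ZMod.natCast_val, ZMod.cast_id]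
      · refine Finset.mem_image.mpr ⟨x.val - d, Finset.mem_range.mpr (by omega), ?_⟩
        have hc : ((x.val - d : ℕ) : ZMod n) = x + (d : ZMod n) := by
          rw [Nat.cast_sub hx]
          rw [show ((x.val : ℕ) : ZMod n) = x by simp [ZMod.natCast_val, ZMod.cast_id]]
          rw [sub_eq_add_neg, neg_eq_of_add_eq_zero_left hdd]
        rw [hc]
        rw [show x + (d : ZMod n) + (d : ZMod n) = x by rw [add_assoc, hdd, add_zero]]
        exact Sym2.eq_swap
    calc S.card ≤ _ := Finset.card_le_card hsub
      _ ≤ (Finset.range d).card := Finset.card_image_le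
      _ = d := Finset.card_range d
      _ = n / 2 := by omega
  · rw [if_neg h]
    have hsub : S ⊆ Finset.univ.image (fun x : ZMod n => s(x, x + (d : ZMod n))) := by
      intro e he
      obtain ⟨x, rfl⟩ := dcl_eq_imp e hd2 (hS e he)
      exact Finset.mem_image.mpr ⟨x, Finset.mem_univ x, rfl⟩
    calc S.card ≤ _ := Finset.card_le_card hsub
      _ ≤ (Finset.univ : Finset (ZMod n)).card := Finset.card_image_le
      _ = n := by rw [Finset.card_univ, ZMod.card]


lemma class_bound {Δ : ℕ} (hΔ : Δ < n / 2) {P : Finset (Finset (ZMod n))}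
    (hP : IsPacking n 2 Δ P) {d : ℕ} (hd2 : 2 * d ≤ n) :
    (P.filter (fun A => Dcl A = d)).card ≤
      if 2 * d = n then n / (2 * Δ + 2) else n / (Δ + 1) := by
  classical
  have h2Δ : 2 * Δ < n := by omega
  set Pd := P.filter (fun A => Dcl A = d) with hPd
  have hmem : ∀ A ∈ Pd, ∃ a b : ZMod n, a ≠ b ∧ A = {a, b} := by
    intro A hA
    have hA2 : A.card = 2 := hP.1 A (Finset.mem_filter.mp hA).1
    exact Finset.card_eq_two.mp hA2
  have hdisj : (Pd : Set (Finset (ZMod n))).PairwiseDisjoint (EsetF n Δ) := by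
    intro A hA B hB hAB
    have h := hP.2 A (Finset.mem_filter.mp hA).1 B (Finset.mem_filter.mp hB).1 hAB
    simp only [Function.onFun]
    rw [Finset.disjoint_left]
    intro e heA heB
    have : e ∈ Eset n Δ A ∩ Eset n Δ B := ⟨mem_EsetF.mp heA, mem_EsetF.mp heB⟩
    rw [h] at this
    exact this
  have hcard : Pd.card * (Δ + 1) = (Pd.biUnion (EsetF n Δ)).card := by
    rw [Finset.card_biUnion (fun A hA B hB hAB => hdisj hA hB hAB)]
    rw [Finset.sum_congr rfl (fun A hA => ?_), Finset.sum_const, smul_eq_mul]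
    obtain ⟨a, b, hab, rfl⟩ := hmem A hA
    exact card_EsetF h2Δ hab
  have hdcl : ∀ e ∈ Pd.biUnion (EsetF n Δ), dcl e = d := by
    intro e he
    obtain ⟨A, hA, heA⟩ := Finset.mem_biUnion.mp he
    obtain ⟨a, b, hab, rfl⟩ := hmem A hA
    rw [dcl_of_mem_Eset hab (mem_EsetF.mp heA)]
    exact (Finset.mem_filter.mp hA).2
  have hle := edges_card_le hd2 _ hdcl
  rw [← hcard] at hle
  by_cases h : 2 * d = n
  · rw [if_pos h] at hle ⊢
    rw [show 2 * Δ + 2 = 2 * (Δ + 1) by ring, ← Nat.div_div_eq_div_mul]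
    exact (Nat.le_div_iff_mul_le (Nat.succ_pos Δ)).mpr hle
  · rw [if_neg h] at hle ⊢
    exact (Nat.le_div_iff_mul_le (Nat.succ_pos Δ)).mpr hle

lemma sum_formula (hn : 2 ≤ n) (Δ : ℕ) :
    ∑ d ∈ Finset.Icc 1 (n / 2), (if 2 * d = n then n / (2 * Δ + 2) else n / (Δ + 1)) =
      if Odd n then ((n - 1) / 2) * (n / (Δ + 1))
      else (n / 2 - 1) * (n / (Δ + 1)) + n / (2 * Δ + 2) := by
  by_cases hodd : Odd n
  · rw [if_pos hodd]
    obtain ⟨k, hk⟩ := hodd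
    rw [Finset.sum_congr rfl (fun d _ => if_neg (by omega))]
    rw [Finset.sum_const, Nat.card_Icc, smul_eq_mul]
    congr 1
    omega
  · rw [if_neg hodd]
    have hev : n % 2 = 0 := Nat.even_iff.mp (Nat.not_odd_iff_even.mp hodd)
    have hsplit : Finset.Icc 1 (n / 2) = insert (n / 2) (Finset.Icc 1 (n / 2 - 1)) := by
      ext x
      simp only [Finset.mem_insert, Finset.mem_Icc]
      omega
    rw [hsplit, Finset.sum_insert (by simp only [Finset.mem_Icc]; omega)]
    rw [if_pos (by omega)]
    rw [Finset.sum_congr rfl (fun d hd => if_neg (by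
      have := Finset.mem_Icc.mp hd
      omega))]
    rw [Finset.sum_const, Nat.card_Icc, smul_eq_mul]
    have : n / 2 - 1 + 1 - 1 = n / 2 - 1 := by omega
    rw [this, Nat.add_comm]

lemma upper_bound {Δ : ℕ} (hn : 2 ≤ n) (hΔ : Δ < n / 2) {P : Finset (Finset (ZMod n))}
    (hP : IsPacking n 2 Δ P) :
    P.card ≤ if Odd n then ((n - 1) / 2) * (n / (Δ + 1))
      else (n / 2 - 1) * (n / (Δ + 1)) + n / (2 * Δ + 2) := by
  classical
  rw [← sum_formula hn Δ]
  have hfib : P.card = ∑ d ∈ Finset.Icc 1 (n / 2), (P.filter (fun A => Dcl A = d)).card := by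
    apply Finset.card_eq_sum_card_fiberwise
    intro A hA
    obtain ⟨a, b, hab, rfl⟩ := Finset.card_eq_two.mp (hP.1 A hA)
    have := Dcl_bounds hab
    simp only [Finset.mem_coe, Finset.mem_Icc]
    omega
  rw [hfib]
  apply Finset.sum_le_sum
  intro d hd
  have hd2 : 2 * d ≤ n := by
    have := Finset.mem_Icc.mp hd
    omega
  exact class_bound hΔ hP hd2

def cnt (n Δ d : ℕ) : ℕ := if 2 * d = n then n / (2 * Δ + 2) else n / (Δ + 1)

def cpair (n Δ d j : ℕ) : Finset (ZMod n) :=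
  {((j * (Δ + 1) : ℕ) : ZMod n), ((j * (Δ + 1) : ℕ) : ZMod n) + (d : ZMod n)}

noncomputable def Pmax (n Δ : ℕ) : Finset (Finset (ZMod n)) :=
  (Finset.Icc 1 (n / 2)).biUnion fun d => (Finset.range (cnt n Δ d)).image (cpair n Δ d)

omit [NeZero n] in
lemma cnt_mul_le {Δ d : ℕ} : cnt n Δ d * (Δ + 1) ≤ if 2 * d = n then n / 2 else n := by
  rw [cnt]
  by_cases h : 2 * d = n
  · rw [if_pos h, if_pos h, show 2 * Δ + 2 = 2 * (Δ + 1) by ring, ← Nat.div_div_eq_div_mul]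
    exact Nat.div_mul_le_self _ _
  · rw [if_neg h, if_neg h]
    exact Nat.div_mul_le_self _ _

omit [NeZero n] in
lemma base_lt {Δ d j τ : ℕ} (hj : j < cnt n Δ d) (hτ : τ ≤ Δ) :
    j * (Δ + 1) + τ < if 2 * d = n then n / 2 else n := by
  have step : j * (Δ + 1) + τ < (j + 1) * (Δ + 1) := by
    rw [add_one_mul]
    exact Nat.add_lt_add_left (by omega) _
  have step2 : (j + 1) * (Δ + 1) ≤ cnt n Δ d * (Δ + 1) := Nat.mul_le_mul_right _ hj
  have step3 := cnt_mul_le (n := n) (Δ := Δ) (d := d)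
  calc j * (Δ + 1) + τ < (j + 1) * (Δ + 1) := step
    _ ≤ cnt n Δ d * (Δ + 1) := step2
    _ ≤ _ := step3

omit [NeZero n] in
lemma base_lt_n {Δ d j τ : ℕ} (hj : j < cnt n Δ d) (hτ : τ ≤ Δ) :
    j * (Δ + 1) + τ < n := by
  have := base_lt (n := n) hj hτ
  split_ifs at this <;> omega

omit [NeZero n] in
lemma base_lt_half {Δ d j τ : ℕ} (h : 2 * d = n) (hj : j < cnt n Δ d) (hτ : τ ≤ Δ) :
    j * (Δ + 1) + τ < n / 2 := by
  have := base_lt (n := n) hj hτ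
  rw [if_pos h] at this
  exact this

lemma dne {d : ℕ} (hd1 : 0 < d) (hd2 : 2 * d ≤ n) : (d : ZMod n) ≠ 0 := by
  rw [Ne, ZMod.natCast_eq_zero_iff]
  intro h
  exact absurd (Nat.le_of_dvd hd1 h) (by omega)

lemma cpair_ne {Δ d j : ℕ} (hd1 : 0 < d) (hd2 : 2 * d ≤ n) :
    ((j * (Δ + 1) : ℕ) : ZMod n) ≠ ((j * (Δ + 1) : ℕ) : ZMod n) + (d : ZMod n) :=
  fun h => dne hd1 hd2 (left_eq_add.mp h)

lemma cpair_card {Δ d j : ℕ} (hd1 : 0 < d) (hd2 : 2 * d ≤ n) :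
    (cpair n Δ d j).card = 2 :=
  Finset.card_pair (cpair_ne hd1 hd2)

lemma Dcl_cpair {Δ d j : ℕ} (hd1 : 0 < d) (hd2 : 2 * d ≤ n) :
    Dcl (cpair n Δ d j) = d := by
  rw [cpair, Dcl_pair (cpair_ne hd1 hd2), dcl_base _ hd1 hd2]

lemma Eset_cpair {Δ d j : ℕ} (hd1 : 0 < d) (hd2 : 2 * d ≤ n) {e : Sym2 (ZMod n)} :
    e ∈ Eset n Δ (cpair n Δ d j) ↔ ∃ τ : ℕ, τ ≤ Δ ∧
      e = s(((j * (Δ + 1) + τ : ℕ) : ZMod n),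
            ((j * (Δ + 1) + τ : ℕ) : ZMod n) + (d : ZMod n)) := by
  rw [cpair, Eset_pair (cpair_ne hd1 hd2)]
  have key : ∀ τ : ℕ,
      s(((j * (Δ + 1) : ℕ) : ZMod n) + (τ : ZMod n),
        (((j * (Δ + 1) : ℕ) : ZMod n) + (d : ZMod n)) + (τ : ZMod n)) =
      s(((j * (Δ + 1) + τ : ℕ) : ZMod n),
        ((j * (Δ + 1) + τ : ℕ) : ZMod n) + (d : ZMod n)) := by
    intro τ
    have h1 : ((j * (Δ + 1) : ℕ) : ZMod n) + (τ : ZMod n) = ((j * (Δ + 1) + τ : ℕ) : ZMod n) := by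
      push_cast; ring
    rw [← h1, add_right_comm]
  constructor
  · rintro ⟨τ, hτ, rfl⟩
    exact ⟨τ, hτ, key τ⟩
  · rintro ⟨τ, hτ, rfl⟩
    exact ⟨τ, hτ, (key τ).symm⟩

omit [NeZero n] in
lemma interval_disj {Δ j j' τ σ : ℕ} (hτ : τ ≤ Δ) (hσ : σ ≤ Δ) (hne : j ≠ j')
    (h : j * (Δ + 1) + τ = j' * (Δ + 1) + σ) : False := by
  rcases Nat.lt_or_ge j j' with hlt | hge
  · have h1 : (j + 1) * (Δ + 1) ≤ j' * (Δ + 1) := Nat.mul_le_mul_right _ hlt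
    rw [add_one_mul] at h1
    linarith
  · have hlt : j' < j := by omega
    have h1 : (j' + 1) * (Δ + 1) ≤ j * (Δ + 1) := Nat.mul_le_mul_right _ hlt
    rw [add_one_mul] at h1
    linarith

lemma cpair_inj {Δ d : ℕ} (hd1 : 0 < d) (hd2 : 2 * d ≤ n) {j j' : ℕ}
    (hj : j < cnt n Δ d) (hj' : j' < cnt n Δ d)
    (h : cpair n Δ d j = cpair n Δ d j') : j = j' := by
  by_contra hne
  have hpn : j * (Δ + 1) < n := by
    have := base_lt_n (n := n) (Δ := Δ) (d := d) hj (Nat.zero_le Δ)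
    omega
  have hqn : j' * (Δ + 1) < n := by
    have := base_lt_n (n := n) (Δ := Δ) (d := d) hj' (Nat.zero_le Δ)
    omega
  have hmemx : ((j * (Δ + 1) : ℕ) : ZMod n) ∈ cpair n Δ d j' := by
    rw [← h, cpair]
    exact Finset.mem_insert_self _ _
  have hbase : ¬ (((j * (Δ + 1) : ℕ) : ZMod n) = ((j' * (Δ + 1) : ℕ) : ZMod n)) := by
    intro hxy
    have := (cast_inj_lt hpn hqn).mp hxy
    exact hne (Nat.eq_of_mul_eq_mul_right (Nat.succ_pos Δ) this)
  rw [cpair, Finset.mem_insert, Finset.mem_singleton] at hmemx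
  rcases hmemx with hxy | hxyd
  · exact hbase hxy
  · have hmemxd : ((j * (Δ + 1) : ℕ) : ZMod n) + (d : ZMod n) ∈ cpair n Δ d j' := by
      rw [← h, cpair]
      exact Finset.mem_insert_of_mem (Finset.mem_singleton_self _)
    rw [cpair, Finset.mem_insert, Finset.mem_singleton] at hmemxd
    rcases hmemxd with hxdy | hxdyd
    · -- x = y + d and x + d = y, so 2d = 0 mod n, hence 2d = n
      have h2d : 2 * d = n := by
        have hx2 : ((j * (Δ + 1) : ℕ) : ZMod n) + ((d : ZMod n) + (d : ZMod n))
          = ((j * (Δ + 1) : ℕ) : ZMod n) := by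
          rw [← add_assoc, hxdy, ← hxyd]
        have h4 := add_eq_left.mp hx2
        have h5 : ((2 * d : ℕ) : ZMod n) = 0 := by push_cast; rw [two_mul]; exact h4
        rw [ZMod.natCast_eq_zero_iff] at h5
        exact le_antisymm hd2 (Nat.le_of_dvd (by omega) h5)
      have hph : j * (Δ + 1) < n / 2 := by
        have := base_lt_half (n := n) h2d hj (Nat.zero_le Δ)
        omega
      have hqh : j' * (Δ + 1) < n / 2 := by
        have := base_lt_half (n := n) h2d hj' (Nat.zero_le Δ)
        omega
      have hcast : ((j * (Δ + 1) : ℕ) : ZMod n) = ((j' * (Δ + 1) + d : ℕ) : ZMod n) := by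
        rw [hxyd]
        push_cast; ring
      have := (cast_inj_lt hpn (by omega)).mp hcast
      omega
    · exact hbase (add_right_cancel hxdyd)

lemma cpair_edge_disj {Δ d d' j j' : ℕ} (hd1 : 0 < d) (hd2 : 2 * d ≤ n)
    (hd1' : 0 < d') (hd2' : 2 * d' ≤ n)
    (hj : j < cnt n Δ d) (hj' : j' < cnt n Δ d')
    (hne : ¬ (d = d' ∧ j = j')) :
    Eset n Δ (cpair n Δ d j) ∩ Eset n Δ (cpair n Δ d' j') = ∅ := by
  rw [Set.eq_empty_iff_forall_notMem]
  rintro e ⟨he1, he2⟩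
  rw [Eset_cpair hd1 hd2] at he1
  rw [Eset_cpair hd1' hd2'] at he2
  obtain ⟨τ, hτ, rfl⟩ := he1
  obtain ⟨σ, hσ, heq⟩ := he2
  have hdd : d = d' := by
    have e1 := dcl_base (n := n) ((j * (Δ + 1) + τ : ℕ) : ZMod n) hd1 hd2
    have e2 := dcl_base (n := n) ((j' * (Δ + 1) + σ : ℕ) : ZMod n) hd1' hd2'
    rw [← heq] at e2
    rw [e1] at e2
    exact e2
  subst hdd
  have hjj : j ≠ j' := fun h => hne ⟨rfl, h⟩
  have hpn : j * (Δ + 1) + τ < n := base_lt_n hj hτ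
  have hqn : j' * (Δ + 1) + σ < n := base_lt_n hj' hσ
  rcases base_eq_cases hd2 heq with hcase | ⟨h2d, hcase⟩
  · have := (cast_inj_lt hpn hqn).mp hcase
    exact interval_disj hτ hσ hjj this
  · have hph : j * (Δ + 1) + τ < n / 2 := base_lt_half h2d hj hτ
    have hqh : j' * (Δ + 1) + σ < n / 2 := base_lt_half h2d hj' hσ
    have hcast : ((j * (Δ + 1) + τ : ℕ) : ZMod n) = ((j' * (Δ + 1) + σ + d : ℕ) : ZMod n) := by
      rw [hcase]
      push_cast; ring
    have := (cast_inj_lt hpn (by omega)).mp hcast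
    omega

lemma Pmax_packing {Δ : ℕ} : IsPacking n 2 Δ (Pmax n Δ) := by
  classical
  have hmem : ∀ A ∈ Pmax n Δ, ∃ d j : ℕ, 0 < d ∧ 2 * d ≤ n ∧ j < cnt n Δ d ∧
      A = cpair n Δ d j := by
    intro A hA
    rw [Pmax, Finset.mem_biUnion] at hA
    obtain ⟨d, hd, hA⟩ := hA
    rw [Finset.mem_image] at hA
    obtain ⟨j, hj, rfl⟩ := hA
    have hd' := Finset.mem_Icc.mp hd
    exact ⟨d, j, by omega, by omega, Finset.mem_range.mp hj, rfl⟩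
  constructor
  · intro A hA
    obtain ⟨d, j, hd1, hd2, hj, rfl⟩ := hmem A hA
    exact cpair_card hd1 hd2
  · intro A hA B hB hAB
    obtain ⟨d, j, hd1, hd2, hj, rfl⟩ := hmem A hA
    obtain ⟨d', j', hd1', hd2', hj', rfl⟩ := hmem B hB
    apply cpair_edge_disj hd1 hd2 hd1' hd2' hj hj'
    rintro ⟨rfl, rfl⟩
    exact hAB rfl

lemma Pmax_card {Δ : ℕ} (hn : 2 ≤ n) :
    (Pmax n Δ).card = if Odd n then ((n - 1) / 2) * (n / (Δ + 1))
      else (n / 2 - 1) * (n / (Δ + 1)) + n / (2 * Δ + 2) := by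
  classical
  rw [← sum_formula hn Δ, Pmax]
  rw [Finset.card_biUnion]
  · apply Finset.sum_congr rfl
    intro d hd
    have hd' := Finset.mem_Icc.mp hd
    have hd1 : 0 < d := by omega
    have hd2 : 2 * d ≤ n := by omega
    rw [Finset.card_image_of_injOn, Finset.card_range, cnt]
    intro j hj j' hj' h
    simp only [Finset.coe_range, Set.mem_Iio] at hj hj'
    exact cpair_inj hd1 hd2 hj hj' h
  · intro d hd d' hd' hdd
    have h1 := Finset.mem_Icc.mp hd
    have h2 := Finset.mem_Icc.mp hd'
    simp only [Function.onFun]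
    rw [Finset.disjoint_left]
    intro A hA hA'
    rw [Finset.mem_image] at hA hA'
    obtain ⟨j, hj, rfl⟩ := hA
    obtain ⟨j', hj', hA'⟩ := hA'
    apply hdd
    have e1 : Dcl (cpair n Δ d j) = d := Dcl_cpair (by omega) (by omega)
    have e2 : Dcl (cpair n Δ d' j') = d' := Dcl_cpair (by omega) (by omega)
    rw [hA'] at e2
    rw [e1] at e2
    exact e2

end TwoPack


/-- For `0 ≤ Δ < ⌊n/2⌋`, the maximum size of a `(2,Δ)`-packing of
`K_n` is `((n-1)/2)·⌊n/(Δ+1)⌋` for odd `n`, and `(n/2 - 1)·⌊n/(Δ+1)⌋ + ⌊n/(2Δ+2)⌋`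
for even `n`. -/
theorem max_two_packing (n Δ : ℕ) (hn : 3 ≤ n) (hΔ : Δ < n / 2) :
    (∃ P : Finset (Finset (ZMod n)), IsPacking n 2 Δ P ∧
      P.card = (if Odd n then ((n - 1) / 2) * (n / (Δ + 1))
                else (n / 2 - 1) * (n / (Δ + 1)) + n / (2 * Δ + 2))) ∧
    (∀ P : Finset (Finset (ZMod n)), IsPacking n 2 Δ P →
      P.card ≤ (if Odd n then ((n - 1) / 2) * (n / (Δ + 1))
                else (n / 2 - 1) * (n / (Δ + 1)) + n / (2 * Δ + 2))) := by
  haveI : NeZero n := ⟨by omega⟩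
  constructor
  · exact ⟨TwoPack.Pmax n Δ, TwoPack.Pmax_packing, TwoPack.Pmax_card (by omega)⟩
  · intro P hP
    exact TwoPack.upper_bound (by omega) hΔ hP
end

section
/- Let n, Δ, d be integers with 0 ≤ Δ < ⌊n/2⌋ and 1 ≤ d < n/2, and suppose 3d ≢ 0 (mod n). Let A = {a, a+d, a+2d} ⊆ Z_n for some a ∈ Z_n (so A is a 3-subset in which two edges of the clique C_A have the same difference d). Then the number of edges of the supporting graph G_Δ(A) equals 2Δ + 2 + d if d ≤ Δ, and equals 3(Δ + 1) if d > Δ. -/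
private lemma key_mod (n x y : ℕ) (hn : 0 < n) (hx : x < 2*n) (hy : y < 2*n)
    (h : (x : ZMod n) = (y : ZMod n)) : x = y ∨ x + n = y ∨ y + n = x := by
  rw [ZMod.natCast_eq_natCast_iff] at h
  have h' : x % n = y % n := h
  have ex : x % n = x ∨ x % n + n = x := by
    rcases Nat.lt_or_ge x n with h1 | h1
    · exact Or.inl (Nat.mod_eq_of_lt h1)
    · right
      have h2 : x % n = (x - n) % n := Nat.mod_eq_sub_mod h1
      have h3 : (x - n) % n = x - n := Nat.mod_eq_of_lt (by omega)
      omega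
  have ey : y % n = y ∨ y % n + n = y := by
    rcases Nat.lt_or_ge y n with h1 | h1
    · exact Or.inl (Nat.mod_eq_of_lt h1)
    · right
      have h2 : y % n = (y - n) % n := Nat.mod_eq_sub_mod h1
      have h3 : (y - n) % n = y - n := Nat.mod_eq_of_lt (by omega)
      omega
  omega

private def gEdge (n : ℕ) (a : ZMod n) (u v : ℕ) : Sym2 (ZMod n) :=
  s(a + (u : ZMod n), a + (v : ZMod n))

private lemma key_gEdge (n : ℕ) (hn : 0 < n) (a : ZMod n) {x y x' y' : ℕ}
    (hx : x < 2*n) (hy : y < 2*n) (hx' : x' < 2*n) (hy' : y' < 2*n)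
    (h : gEdge n a x y = gEdge n a x' y') :
    ((x = x' ∨ x + n = x' ∨ x' + n = x) ∧ (y = y' ∨ y + n = y' ∨ y' + n = y)) ∨
    ((x = y' ∨ x + n = y' ∨ y' + n = x) ∧ (y = x' ∨ y + n = x' ∨ x' + n = y)) := by
  rw [gEdge, gEdge, Sym2.eq_iff] at h
  rcases h with ⟨h1, h2⟩ | ⟨h1, h2⟩
  · exact Or.inl ⟨key_mod n x x' hn hx hx' (by linear_combination h1),
      key_mod n y y' hn hy hy' (by linear_combination h2)⟩
  · exact Or.inr ⟨key_mod n x y' hn hx hy' (by linear_combination h1),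
      key_mod n y x' hn hy hx' (by linear_combination h2)⟩

/-- For `A = {a, a+d, a+2d} ⊆ Z_n` with `1 ≤ d < n/2`,
`3d ≢ 0 (mod n)` and `0 ≤ Δ < ⌊n/2⌋`, the supporting graph `G_Δ(A)` has exactly
`2Δ + 2 + d` edges if `d ≤ Δ`, and `3(Δ+1)` edges if `d > Δ`. -/
theorem supporting_graph_size_three (n Δ d : ℕ) (hΔ : Δ < n / 2)
    (hd1 : 1 ≤ d) (hd2 : 2 * d < n) (hd3 : ((3 * d : ℕ) : ZMod n) ≠ 0)
    (a : ZMod n) :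
    (Eset n Δ ({a, a + (d : ZMod n), a + ((2 * d : ℕ) : ZMod n)} : Finset (ZMod n))).ncard
      = if d ≤ Δ then 2 * Δ + 2 + d else 3 * (Δ + 1) := by
  classical
  have hn : 0 < n := by omega
  haveI : NeZero n := ⟨hn.ne'⟩
  have hΔ2 : 2 * Δ < n := by omega
  have h3dn : 3 * d ≠ n := fun h => hd3 (by rw [h]; exact ZMod.natCast_self n)
  have hda : a ≠ a + (d : ZMod n) := by
    intro h
    have h' : ((0:ℕ) : ZMod n) = (d : ZMod n) := by push_cast; linear_combination h
    have := key_mod n 0 d hn (by omega) (by omega) h'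
    omega
  have hda2 : a ≠ a + ((2*d : ℕ) : ZMod n) := by
    intro h
    have h' : ((0:ℕ) : ZMod n) = ((2*d : ℕ) : ZMod n) := by
      push_cast at h ⊢; linear_combination h
    have := key_mod n 0 (2*d) hn (by omega) (by omega) h'
    omega
  have hdd2 : a + (d : ZMod n) ≠ a + ((2*d : ℕ) : ZMod n) := by
    intro h
    have h' : ((d : ℕ) : ZMod n) = ((2*d : ℕ) : ZMod n) := by
      push_cast at h ⊢; linear_combination h
    have := key_mod n d (2*d) hn (by omega) (by omega) h'
    omega
  set E1 := (Finset.range (Δ+1)).image (fun τ => gEdge n a τ (d+τ)) with hE1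
  set E2 := (Finset.range (Δ+1)).image (fun τ => gEdge n a (d+τ) (2*d+τ)) with hE2
  set E3 := (Finset.range (Δ+1)).image (fun τ => gEdge n a τ (2*d+τ)) with hE3
  have hset : Eset n Δ ({a, a + (d : ZMod n), a + ((2 * d : ℕ) : ZMod n)} : Finset (ZMod n))
      = ↑(E1 ∪ E2 ∪ E3) := by
    ext e
    simp only [Eset, Set.mem_setOf_eq, Finset.coe_union, Set.mem_union, Finset.mem_coe,
      hE1, hE2, hE3, Finset.mem_image, Finset.mem_range, Finset.mem_insert,
      Finset.mem_singleton]
    constructor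
    · rintro ⟨p, hp, q, hq, hpq, τ, hτ, rfl⟩
      rcases hp with rfl | rfl | rfl <;> rcases hq with rfl | rfl | rfl
      · exact absurd rfl hpq
      · refine Or.inl (Or.inl ⟨τ, by omega, ?_⟩)
        rw [gEdge, Sym2.eq_iff]; exact Or.inl ⟨by push_cast; ring, by push_cast; ring⟩
      · refine Or.inr ⟨τ, by omega, ?_⟩
        rw [gEdge, Sym2.eq_iff]; exact Or.inl ⟨by push_cast; ring, by push_cast; ring⟩
      · refine Or.inl (Or.inl ⟨τ, by omega, ?_⟩)
        rw [gEdge, Sym2.eq_iff]; exact Or.inr ⟨by push_cast; ring, by push_cast; ring⟩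
      · exact absurd rfl hpq
      · refine Or.inl (Or.inr ⟨τ, by omega, ?_⟩)
        rw [gEdge, Sym2.eq_iff]; exact Or.inl ⟨by push_cast; ring, by push_cast; ring⟩
      · refine Or.inr ⟨τ, by omega, ?_⟩
        rw [gEdge, Sym2.eq_iff]; exact Or.inr ⟨by push_cast; ring, by push_cast; ring⟩
      · refine Or.inl (Or.inr ⟨τ, by omega, ?_⟩)
        rw [gEdge, Sym2.eq_iff]; exact Or.inr ⟨by push_cast; ring, by push_cast; ring⟩
      · exact absurd rfl hpq
    · rintro ((⟨τ, hτ, rfl⟩ | ⟨τ, hτ, rfl⟩) | ⟨τ, hτ, rfl⟩)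
      · refine ⟨a, Or.inl rfl, a + (d : ZMod n), Or.inr (Or.inl rfl), hda, τ, by omega, ?_⟩
        rw [gEdge, Sym2.eq_iff]; exact Or.inl ⟨by push_cast; ring, by push_cast; ring⟩
      · refine ⟨a + (d : ZMod n), Or.inr (Or.inl rfl), a + ((2*d:ℕ) : ZMod n),
          Or.inr (Or.inr rfl), hdd2, τ, by omega, ?_⟩
        rw [gEdge, Sym2.eq_iff]; exact Or.inl ⟨by push_cast; ring, by push_cast; ring⟩
      · refine ⟨a, Or.inl rfl, a + ((2*d:ℕ) : ZMod n), Or.inr (Or.inr rfl), hda2, τ, by omega, ?_⟩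
        rw [gEdge, Sym2.eq_iff]; exact Or.inl ⟨by push_cast; ring, by push_cast; ring⟩
  rw [hset, Set.ncard_coe_finset]
  have hinj3 : Set.InjOn (fun τ => gEdge n a τ (2*d+τ)) (Finset.range (Δ+1)) := by
    intro τ hτ τ' hτ' h
    simp only [Finset.coe_range, Set.mem_Iio] at hτ hτ'
    have := key_gEdge n hn a (x := τ) (y := 2*d+τ) (x' := τ') (y' := 2*d+τ')
      (by omega) (by omega) (by omega) (by omega) h
    omega
  have hcard3 : E3.card = Δ + 1 := by
    rw [hE3, Finset.card_image_of_injOn hinj3, Finset.card_range]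
  have hinjG : Set.InjOn (fun τ => gEdge n a τ (d+τ)) (Finset.range (Δ+d+1)) := by
    intro τ hτ τ' hτ' h
    simp only [Finset.coe_range, Set.mem_Iio] at hτ hτ'
    have := key_gEdge n hn a (x := τ) (y := d+τ) (x' := τ') (y' := d+τ')
      (by omega) (by omega) (by omega) (by omega) h
    omega
  have hE1sub : E1 ⊆ (Finset.range (Δ+d+1)).image (fun τ => gEdge n a τ (d+τ)) := by
    rw [hE1]
    exact Finset.image_subset_image (Finset.range_subset_range.mpr (by omega))
  have hE2sub : E2 ⊆ (Finset.range (Δ+d+1)).image (fun τ => gEdge n a τ (d+τ)) := by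
    rw [hE2]
    intro e he
    simp only [Finset.mem_image, Finset.mem_range] at he ⊢
    obtain ⟨τ, hτ, rfl⟩ := he
    refine ⟨d + τ, by omega, ?_⟩
    rw [gEdge, gEdge, Sym2.eq_iff]
    exact Or.inl ⟨rfl, by push_cast; ring⟩
  have hG3 : Disjoint ((Finset.range (Δ+d+1)).image (fun τ => gEdge n a τ (d+τ))) E3 := by
    rw [Finset.disjoint_left]
    rintro e he h3
    rw [hE3] at h3
    simp only [Finset.mem_image, Finset.mem_range] at he h3
    obtain ⟨τ, hτ, rfl⟩ := he
    obtain ⟨τ', hτ', heq⟩ := h3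
    have := key_gEdge n hn a (x := τ') (y := 2*d+τ') (x' := τ) (y' := d+τ)
      (by omega) (by omega) (by omega) (by omega) heq
    omega
  have hdisj : Disjoint (E1 ∪ E2) E3 :=
    hG3.mono_left (Finset.union_subset hE1sub hE2sub)
  rw [Finset.card_union_of_disjoint hdisj, hcard3]
  by_cases hcase : d ≤ Δ
  · have hU : E1 ∪ E2 = (Finset.range (Δ+d+1)).image (fun τ => gEdge n a τ (d+τ)) := by
      refine Finset.Subset.antisymm (Finset.union_subset hE1sub hE2sub) ?_
      intro e he
      simp only [Finset.mem_image, Finset.mem_range] at he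
      obtain ⟨τ, hτ, rfl⟩ := he
      simp only [hE1, hE2, Finset.mem_union, Finset.mem_image, Finset.mem_range]
      by_cases hτd : τ ≤ Δ
      · exact Or.inl ⟨τ, by omega, rfl⟩
      · refine Or.inr ⟨τ - d, by omega, ?_⟩
        have e1 : d + (τ - d) = τ := by omega
        have e2 : 2*d + (τ - d) = d + τ := by omega
        rw [e1, e2]
    rw [hU, Finset.card_image_of_injOn hinjG, Finset.card_range, if_pos hcase]
    omega
  · have hdisj12 : Disjoint E1 E2 := by
      rw [Finset.disjoint_left, hE1, hE2]
      rintro e he h2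
      simp only [Finset.mem_image, Finset.mem_range] at he h2
      obtain ⟨τ, hτ, rfl⟩ := he
      obtain ⟨τ', hτ', heq⟩ := h2
      have := key_gEdge n hn a (x := d+τ') (y := 2*d+τ') (x' := τ) (y' := d+τ)
        (by omega) (by omega) (by omega) (by omega) heq
      omega
    have hc1 : E1.card = Δ + 1 := by
      rw [hE1, Finset.card_image_of_injOn (hinjG.mono ?_), Finset.card_range]
      intro x hx
      simp only [Finset.coe_range, Set.mem_Iio] at hx ⊢
      omega
    have hc2 : E2.card = Δ + 1 := by
      rw [hE2, Finset.card_image_of_injOn ?_, Finset.card_range]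
      intro τ hτ τ' hτ' h
      simp only [Finset.coe_range, Set.mem_Iio] at hτ hτ'
      have := key_gEdge n hn a (x := d+τ) (y := 2*d+τ) (x' := d+τ') (y' := 2*d+τ')
        (by omega) (by omega) (by omega) (by omega) h
      omega
    rw [Finset.card_union_of_disjoint hdisj12, hc1, hc2, if_neg hcase]
    ring
end
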